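/- arXiv:2605.07360 — 10 statements merged into one kernel-verified Lean document; each statement's English description precedes it below -/
import Mathlib

section
/- Let θ_1, θ_2, θ_3 : ℝ → ℝ be a solution of the identical Kuramoto model for N = 3 and let Δ_1 = θ_1 − θ_2, Δ_2 = θ_2 − θ_3, Δ_3 = θ_3 − θ_1. Then the observable u_1(t) = sin(Δ_1(t)/2) satisfies, for all t, u_1'(t) = Λ_1(t)·u_1(t), where Λ_1(t) = −(K/6)·(2 + 2·cos Δ_1(t) + cos Δ_2(t) + cos Δ_3(t)). -/
/-!
Subtracting the first two equations gives `Δ₁' = (K/3)(sin Δ₂ + sin Δ₃ − 2 sin Δ₁)`, and the chain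
rule multiplies this by `cos(Δ₁/2)/2`. Each term is then a multiple of `sin(Δ₁/2)`:
`sin Δ₁ cos(Δ₁/2) = (1 + cos Δ₁) sin(Δ₁/2)`, and since `Δ₁ + Δ₂ + Δ₃ = 0` we have
`sin(Δ₂ + Δ₁/2) = −sin(Δ₃ + Δ₁/2)`, i.e. `cos(Δ₁/2)(sin Δ₂ + sin Δ₃) = −(cos Δ₂ + cos Δ₃) sin(Δ₁/2)`.
-/

open Real

theorem sin_mul_cos_half (x : ℝ) : sin x * cos (x / 2) = (1 + cos x) * sin (x / 2) := by
  have hx : x = 2 * (x / 2) := by ring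
  rw [hx, sin_two_mul, cos_two_mul, ← hx]
  ring

theorem cos_half_mul_sin_add_sin_of_add_eq_zero {x y z : ℝ} (h : x + y + z = 0) :
    cos (x / 2) * (sin y + sin z) = -(cos y + cos z) * sin (x / 2) := by
  have hz : z + x / 2 = -(y + x / 2) := by linarith
  have hsum : sin (y + x / 2) + sin (z + x / 2) = 0 := by rw [hz, sin_neg]; ring
  rw [sin_add, sin_add] at hsum
  linear_combination hsum

theorem cos_half_mul_sin_add_sin_sub_two_sin_of_add_eq_zero {x y z : ℝ} (h : x + y + z = 0) :
    cos (x / 2) * (sin y + sin z - 2 * sin x) = -(2 + 2 * cos x + cos y + cos z) * sin (x / 2) := by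
  linear_combination cos_half_mul_sin_add_sin_of_add_eq_zero h - 2 * sin_mul_cos_half x

theorem kuramoto3_velocity_sub (ω K a b c : ℝ) :
    (ω + K / 3 * (sin (a - a) + sin (b - a) + sin (c - a)))
      - (ω + K / 3 * (sin (a - b) + sin (b - b) + sin (c - b)))
      = K / 3 * (sin (b - c) + sin (c - a) - 2 * sin (a - b)) := by
  rw [show b - a = -(a - b) by ring, show c - b = -(b - c) by ring, sub_self, sub_self,
    sin_neg, sin_neg, sin_zero]
  ring

theorem growth_rate_u1_kuramoto3_general
    (ω K : ℝ) (θ1 θ2 θ3 : ℝ → ℝ)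
    (h1 : ∀ t : ℝ, HasDerivAt θ1
      (ω + K / 3 * (Real.sin (θ1 t - θ1 t) + Real.sin (θ2 t - θ1 t) + Real.sin (θ3 t - θ1 t))) t)
    (h2 : ∀ t : ℝ, HasDerivAt θ2
      (ω + K / 3 * (Real.sin (θ1 t - θ2 t) + Real.sin (θ2 t - θ2 t) + Real.sin (θ3 t - θ2 t))) t)
    (Δ1 Δ2 Δ3 : ℝ → ℝ)
    (hΔ1 : ∀ t, Δ1 t = θ1 t - θ2 t)
    (hΔ2 : ∀ t, Δ2 t = θ2 t - θ3 t)
    (hΔ3 : ∀ t, Δ3 t = θ3 t - θ1 t) :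
    ∀ t : ℝ,
      HasDerivAt (fun s => Real.sin (Δ1 s / 2))
        (-(K / 6) * (2 + 2 * Real.cos (Δ1 t) + Real.cos (Δ2 t) + Real.cos (Δ3 t))
          * Real.sin (Δ1 t / 2)) t := by
  intro t
  have hsum : Δ1 t + Δ2 t + Δ3 t = 0 := by rw [hΔ1, hΔ2, hΔ3]; ring
  have hΔ1' : HasDerivAt Δ1 (K / 3 * (sin (Δ2 t) + sin (Δ3 t) - 2 * sin (Δ1 t))) t := by
    rw [hΔ1, hΔ2, hΔ3, funext hΔ1, ← kuramoto3_velocity_sub ω]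
    exact (h1 t).sub (h2 t)
  convert (hΔ1'.div_const 2).sin using 1
  linear_combination (-K / 6) * cos_half_mul_sin_add_sin_sub_two_sin_of_add_eq_zero hsum

/-- For the identical Kuramoto model with `N = 3`, the observable
`u₁ = sin(Δ₁/2)` (where `Δ₁ = θ₁ − θ₂`) satisfies `u₁' = Λ₁·u₁` with
`Λ₁ = −(K/6)·(2 + 2 cos Δ₁ + cos Δ₂ + cos Δ₃)`. -/
theorem growth_rate_u1_kuramoto3
    (ω K : ℝ) (θ1 θ2 θ3 : ℝ → ℝ)
    (h1 : ∀ t : ℝ, HasDerivAt θ1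
      (ω + K / 3 * (Real.sin (θ1 t - θ1 t) + Real.sin (θ2 t - θ1 t) + Real.sin (θ3 t - θ1 t))) t)
    (h2 : ∀ t : ℝ, HasDerivAt θ2
      (ω + K / 3 * (Real.sin (θ1 t - θ2 t) + Real.sin (θ2 t - θ2 t) + Real.sin (θ3 t - θ2 t))) t)
    (h3 : ∀ t : ℝ, HasDerivAt θ3
      (ω + K / 3 * (Real.sin (θ1 t - θ3 t) + Real.sin (θ2 t - θ3 t) + Real.sin (θ3 t - θ3 t))) t)
    (Δ1 Δ2 Δ3 : ℝ → ℝ)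
    (hΔ1 : ∀ t, Δ1 t = θ1 t - θ2 t)
    (hΔ2 : ∀ t, Δ2 t = θ2 t - θ3 t)
    (hΔ3 : ∀ t, Δ3 t = θ3 t - θ1 t) :
    ∀ t : ℝ,
      HasDerivAt (fun s => Real.sin (Δ1 s / 2))
        (-(K / 6) * (2 + 2 * Real.cos (Δ1 t) + Real.cos (Δ2 t) + Real.cos (Δ3 t))
          * Real.sin (Δ1 t / 2)) t :=
  growth_rate_u1_kuramoto3_general ω K θ1 θ2 θ3 h1 h2 Δ1 Δ2 Δ3 hΔ1 hΔ2 hΔ3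
end

section
/- Let θ_1, θ_2, θ_3 : ℝ → ℝ be a solution of the identical Kuramoto model for N = 3 and let Δ_1 = θ_1 − θ_2, Δ_2 = θ_2 − θ_3, Δ_3 = θ_3 − θ_1. Then the observable u_4(t) = sin((Δ_1(t) − Δ_2(t))/2) satisfies, for all t, u_4'(t) = −(K/2)·(cos Δ_1(t) + cos Δ_2(t))·u_4(t). -/
/-!
The frequency `ω` cancels from `(Δ₁ − Δ₂)' = θ₁' − 2θ₂' + θ₃'`, and by oddness of `sin` the
coupling terms collapse to `(Δ₁ − Δ₂)' = K (sin Δ₂ − sin Δ₁)`. The chain rule then gives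
`u₄' = (K/2) cos((Δ₁ − Δ₂)/2) (sin Δ₂ − sin Δ₁)`, and the sum-to-product formulas turn this
into `−(K/2) (cos Δ₁ + cos Δ₂) sin((Δ₁ − Δ₂)/2)`.
-/

open Real

lemma cos_half_sub_mul_sin_sub_sin (a b : ℝ) :
    cos ((a - b) / 2) * (sin a - sin b) = (cos a + cos b) * sin ((a - b) / 2) := by
  rw [sin_sub_sin, cos_add_cos]
  ring

lemma hasDerivAt_kuramoto3_sub_sub {ω K t : ℝ} {θ1 θ2 θ3 : ℝ → ℝ}
    (h1 : HasDerivAt θ1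
      (ω + K / 3 * (sin (θ1 t - θ1 t) + sin (θ2 t - θ1 t) + sin (θ3 t - θ1 t))) t)
    (h2 : HasDerivAt θ2
      (ω + K / 3 * (sin (θ1 t - θ2 t) + sin (θ2 t - θ2 t) + sin (θ3 t - θ2 t))) t)
    (h3 : HasDerivAt θ3
      (ω + K / 3 * (sin (θ1 t - θ3 t) + sin (θ2 t - θ3 t) + sin (θ3 t - θ3 t))) t) :
    HasDerivAt (θ1 - θ2 - (θ2 - θ3))
      (K * (sin (θ2 t - θ3 t) - sin (θ1 t - θ2 t))) t := by
  refine ((h1.sub h2).sub (h2.sub h3)).congr_deriv ?_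
  simp only [sub_self, sin_zero]
  rw [← neg_sub (θ1 t) (θ2 t), ← neg_sub (θ2 t) (θ3 t), ← neg_sub (θ1 t) (θ3 t), sin_neg,
    sin_neg, sin_neg]
  ring

theorem growth_rate_u4_kuramoto3_general
    (ω K : ℝ) (θ1 θ2 θ3 : ℝ → ℝ)
    (h1 : ∀ t : ℝ, HasDerivAt θ1
      (ω + K / 3 * (Real.sin (θ1 t - θ1 t) + Real.sin (θ2 t - θ1 t) + Real.sin (θ3 t - θ1 t))) t)
    (h2 : ∀ t : ℝ, HasDerivAt θ2
      (ω + K / 3 * (Real.sin (θ1 t - θ2 t) + Real.sin (θ2 t - θ2 t) + Real.sin (θ3 t - θ2 t))) t)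
    (h3 : ∀ t : ℝ, HasDerivAt θ3
      (ω + K / 3 * (Real.sin (θ1 t - θ3 t) + Real.sin (θ2 t - θ3 t) + Real.sin (θ3 t - θ3 t))) t)
    (Δ1 Δ2 : ℝ → ℝ)
    (hΔ1 : ∀ t, Δ1 t = θ1 t - θ2 t)
    (hΔ2 : ∀ t, Δ2 t = θ2 t - θ3 t) :
    ∀ t : ℝ,
      HasDerivAt (fun s => Real.sin ((Δ1 s - Δ2 s) / 2))
        (-(K / 2) * (Real.cos (Δ1 t) + Real.cos (Δ2 t))
          * Real.sin ((Δ1 t - Δ2 t) / 2)) t := by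
  obtain rfl : Δ1 = fun s => θ1 s - θ2 s := funext hΔ1
  obtain rfl : Δ2 = fun s => θ2 s - θ3 s := funext hΔ2
  intro t
  have hdiff := hasDerivAt_kuramoto3_sub_sub (h1 t) (h2 t) (h3 t)
  refine (hdiff.div_const 2).sin.congr_deriv ?_
  simp only [Pi.sub_apply]
  linear_combination (-K / 2) * cos_half_sub_mul_sin_sub_sin (θ1 t - θ2 t) (θ2 t - θ3 t)

/-- For the identical Kuramoto model with `N = 3`, the observable
`u₄ = sin((Δ₁ − Δ₂)/2)` satisfies `u₄' = −(K/2)·(cos Δ₁ + cos Δ₂)·u₄`. -/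
theorem growth_rate_u4_kuramoto3
    (ω K : ℝ) (θ1 θ2 θ3 : ℝ → ℝ)
    (h1 : ∀ t : ℝ, HasDerivAt θ1
      (ω + K / 3 * (Real.sin (θ1 t - θ1 t) + Real.sin (θ2 t - θ1 t) + Real.sin (θ3 t - θ1 t))) t)
    (h2 : ∀ t : ℝ, HasDerivAt θ2
      (ω + K / 3 * (Real.sin (θ1 t - θ2 t) + Real.sin (θ2 t - θ2 t) + Real.sin (θ3 t - θ2 t))) t)
    (h3 : ∀ t : ℝ, HasDerivAt θ3
      (ω + K / 3 * (Real.sin (θ1 t - θ3 t) + Real.sin (θ2 t - θ3 t) + Real.sin (θ3 t - θ3 t))) t)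
    (Δ1 Δ2 Δ3 : ℝ → ℝ)
    (hΔ1 : ∀ t, Δ1 t = θ1 t - θ2 t)
    (hΔ2 : ∀ t, Δ2 t = θ2 t - θ3 t)
    (hΔ3 : ∀ t, Δ3 t = θ3 t - θ1 t) :
    ∀ t : ℝ,
      HasDerivAt (fun s => Real.sin ((Δ1 s - Δ2 s) / 2))
        (-(K / 2) * (Real.cos (Δ1 t) + Real.cos (Δ2 t))
          * Real.sin ((Δ1 t - Δ2 t) / 2)) t :=
  growth_rate_u4_kuramoto3_general ω K θ1 θ2 θ3 h1 h2 h3 Δ1 Δ2 hΔ1 hΔ2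
end

section
/- Let θ_1, θ_2, θ_3 : ℝ → ℝ be a solution of the identical Kuramoto model for N = 3 and let Δ_1 = θ_1 − θ_2, Δ_2 = θ_2 − θ_3, Δ_3 = θ_3 − θ_1. At every time t such that sin((Δ_1(t) − Δ_2(t))/2) ≠ 0 and sin((Δ_3(t) − Δ_1(t))/2) ≠ 0, the function ψ_1(t) = sin³(Δ_1(t)/2) / (sin((Δ_1(t) − Δ_2(t))/2)·sin((Δ_3(t) − Δ_1(t))/2)) is differentiable at t and satisfies ψ_1'(t) = −K·ψ_1(t). -/
/-!
With u, v, w = Δ₁/2, Δ₂/2, Δ₃/2 (so u + v + w = 0), each of sin u, sin (u - v), sin (w - u)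
moves along the flow at a rate proportional to itself:
(sin u)' = sin u · (-K/3) cos u (2 cos u + cos (v - w)),
(sin (u - v))' = sin (u - v) · (-K) cos w cos (u - v),
(sin (w - u))' = sin (w - u) · (-K) cos v cos (w - u).
So ψ₁'/ψ₁ = 3 · rate₁ - rate₂ - rate₃, which the identity
2 cos² u + cos u cos (v - w) - cos (u - v) cos w - cos (w - u) cos v = 1 turns into -K.
Keeping the rates as multipliers avoids dividing by sin u, which may vanish.
-/

open Real

theorem HasDerivAt.div_mul_of_logDeriv {𝕜 : Type*} [NontriviallyNormedField 𝕜]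
    {f g h : 𝕜 → 𝕜} {x α β γ : 𝕜} (hf : HasDerivAt f (f x * α) x)
    (hg : HasDerivAt g (g x * β) x) (hh : HasDerivAt h (h x * γ) x) (hgx : g x ≠ 0)
    (hhx : h x ≠ 0) :
    HasDerivAt (fun y => f y / (g y * h y)) (f x / (g x * h x) * (α - β - γ)) x :=
  (hf.div (hg.mul hh) (mul_ne_zero hgx hhx)).congr_deriv (by rw [Pi.mul_apply]; field_simp; ring)

theorem HasDerivAt.sin_pow_of_eq_sin_mul {u : ℝ → ℝ} {x β : ℝ} (n : ℕ)
    (hu : HasDerivAt u (Real.sin (u x) * β) x) :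
    HasDerivAt (fun y => Real.sin (u y) ^ n)
      (Real.sin (u x) ^ n * (n * Real.cos (u x) * β)) x := by
  refine (hu.sin.pow n).congr_deriv ?_
  cases n with
  | zero => simp
  | succ n => push_cast; ring

theorem cos_half_identity_of_add_add_eq_zero {x y z : ℝ} (h : x + y + z = 0) :
    2 * cos (x / 2) ^ 2 + cos (x / 2) * cos ((y - z) / 2)
      - cos ((x - y) / 2) * cos (z / 2) - cos ((z - x) / 2) * cos (y / 2) = 1 := by
  obtain rfl : z = -(x + y) := by linarith
  set u := x / 2
  set v := y / 2
  rw [show (y - -(x + y)) / 2 = 2 * v + u by ring, show (x - y) / 2 = u - v by ring,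
    show -(x + y) / 2 = -(u + v) by ring, show (-(x + y) - x) / 2 = -(2 * u + v) by ring]
  simp only [cos_neg, cos_add, cos_sub, cos_two_mul, sin_two_mul]
  linear_combination sin u ^ 2 * sin_sq_add_cos_sq v + (1 - cos v ^ 2) * sin_sq_add_cos_sq u

noncomputable def kuramotoVelocity (ω K a b c s : ℝ) : ℝ :=
  ω + K / 3 * (sin (a - s) + sin (b - s) + sin (c - s))

section

variable (ω K a b c : ℝ)

local notation "V" => kuramotoVelocity ω K a b c

theorem kuramotoVelocity_rotate (s : ℝ) : kuramotoVelocity ω K c a b s = V s := by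
  unfold kuramotoVelocity
  ring

theorem kuramotoVelocity_sub_div_two :
    (V a - V b) / 2
      = sin ((a - b) / 2)
        * (-(K / 3) * (2 * cos ((a - b) / 2) + cos (((b - c) - (c - a)) / 2))) := by
  have hsin : sin (c - a) - sin (c - b)
      = -(2 * sin ((a - b) / 2) * cos (((b - c) - (c - a)) / 2)) := by
    rw [sin_sub_sin, show (c - a - (c - b)) / 2 = -((a - b) / 2) by ring,
      show (c - a + (c - b)) / 2 = -(((b - c) - (c - a)) / 2) by ring, sin_neg, cos_neg]
    ring
  have hsin_two_mul : sin (a - b) = 2 * sin ((a - b) / 2) * cos ((a - b) / 2) := by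
    rw [← sin_two_mul]
    ring_nf
  simp only [kuramotoVelocity, sub_self, sin_zero, ← neg_sub a b, sin_neg]
  linear_combination K / 6 * hsin - K / 3 * hsin_two_mul

theorem kuramotoVelocity_sub_sub_div_two :
    ((V a - V b) - (V b - V c)) / 2
      = sin (((a - b) - (b - c)) / 2) * (-K * cos ((c - a) / 2)) := by
  have hsin : sin (b - c) - sin (a - b)
      = -(2 * sin (((a - b) - (b - c)) / 2) * cos ((c - a) / 2)) := by
    rw [sin_sub_sin, show (b - c - (a - b)) / 2 = -(((a - b) - (b - c)) / 2) by ring,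
      show (b - c + (a - b)) / 2 = -((c - a) / 2) by ring, sin_neg, cos_neg]
    ring
  simp only [kuramotoVelocity, sub_self, sin_zero, ← neg_sub a b, ← neg_sub c a,
    ← neg_sub b c, sin_neg]
  linear_combination K / 2 * hsin

end

/-- For the identical Kuramoto model with `N = 3`, at every time `t`
where `sin((Δ₁−Δ₂)/2) ≠ 0` and `sin((Δ₃−Δ₁)/2) ≠ 0`, the Koopman eigenfunction
`ψ₁ = sin³(Δ₁/2)/(sin((Δ₁−Δ₂)/2)·sin((Δ₃−Δ₁)/2))` is differentiable at `t`
with `ψ₁'(t) = −K·ψ₁(t)`. -/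
theorem koopman_eigenfunction_psi1
    (ω K : ℝ) (θ1 θ2 θ3 : ℝ → ℝ)
    (h1 : ∀ t : ℝ, HasDerivAt θ1
      (ω + K / 3 * (Real.sin (θ1 t - θ1 t) + Real.sin (θ2 t - θ1 t) + Real.sin (θ3 t - θ1 t))) t)
    (h2 : ∀ t : ℝ, HasDerivAt θ2
      (ω + K / 3 * (Real.sin (θ1 t - θ2 t) + Real.sin (θ2 t - θ2 t) + Real.sin (θ3 t - θ2 t))) t)
    (h3 : ∀ t : ℝ, HasDerivAt θ3
      (ω + K / 3 * (Real.sin (θ1 t - θ3 t) + Real.sin (θ2 t - θ3 t) + Real.sin (θ3 t - θ3 t))) t)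
    (Δ1 Δ2 Δ3 : ℝ → ℝ)
    (hΔ1 : ∀ t, Δ1 t = θ1 t - θ2 t)
    (hΔ2 : ∀ t, Δ2 t = θ2 t - θ3 t)
    (hΔ3 : ∀ t, Δ3 t = θ3 t - θ1 t)
    (ψ1 : ℝ → ℝ)
    (hψ1 : ∀ t, ψ1 t = Real.sin (Δ1 t / 2) ^ 3
      / (Real.sin ((Δ1 t - Δ2 t) / 2) * Real.sin ((Δ3 t - Δ1 t) / 2))) :
    ∀ t : ℝ,
      Real.sin ((Δ1 t - Δ2 t) / 2) ≠ 0 →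
      Real.sin ((Δ3 t - Δ1 t) / 2) ≠ 0 →
      HasDerivAt ψ1 (-K * ψ1 t) t := by
  obtain rfl : Δ1 = fun s => θ1 s - θ2 s := funext hΔ1
  obtain rfl : Δ2 = fun s => θ2 s - θ3 s := funext hΔ2
  obtain rfl : Δ3 = fun s => θ3 s - θ1 s := funext hΔ3
  obtain rfl := funext hψ1
  intro t hA hB
  set a := θ1 t
  set b := θ2 t
  set c := θ3 t
  have hV1 : HasDerivAt θ1 (kuramotoVelocity ω K a b c a) t := h1 t
  have hV2 : HasDerivAt θ2 (kuramotoVelocity ω K a b c b) t := h2 t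
  have hV3 : HasDerivAt θ3 (kuramotoVelocity ω K a b c c) t := h3 t
  have hnum := HasDerivAt.sin_pow_of_eq_sin_mul 3
    (((hV1.sub hV2).div_const 2).congr_deriv (kuramotoVelocity_sub_div_two ..))
  have hden₁ := HasDerivAt.sin_pow_of_eq_sin_mul 1
    ((((hV1.sub hV2).sub (hV2.sub hV3)).div_const 2).congr_deriv
      (kuramotoVelocity_sub_sub_div_two ..))
  have hden₂ := HasDerivAt.sin_pow_of_eq_sin_mul 1
    ((((hV3.sub hV1).sub (hV1.sub hV2)).div_const 2).congr_deriv
      (by simpa only [kuramotoVelocity_rotate, Pi.sub_apply]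
        using kuramotoVelocity_sub_sub_div_two ω K c a b))
  simp only [pow_one, Pi.sub_apply] at hnum hden₁ hden₂
  refine (hnum.div_mul_of_logDeriv hden₁ hden₂ hA hB).congr_deriv ?_
  conv_rhs => rw [mul_comm]
  congr 1
  push_cast
  linear_combination
    -K * cos_half_identity_of_add_add_eq_zero (x := a - b) (y := b - c) (z := c - a) (by ring)
end

section
/- Let Δ_1, Δ_2, Δ_3 be real numbers with Δ_1 + Δ_2 + Δ_3 = 0, and suppose sin((Δ_1 − Δ_2)/2) ≠ 0, sin((Δ_2 − Δ_3)/2) ≠ 0, sin((Δ_3 − Δ_1)/2) ≠ 0. Define ψ_1 = sin³(Δ_1/2) / (sin((Δ_1 − Δ_2)/2)·sin((Δ_3 − Δ_1)/2)), ψ_2 = sin³(Δ_2/2) / (sin((Δ_2 − Δ_3)/2)·sin((Δ_1 − Δ_2)/2)), and ψ_3 = sin³(Δ_3/2) / (sin((Δ_3 − Δ_1)/2)·sin((Δ_2 − Δ_3)/2)). Then ψ_1 + ψ_2 + ψ_3 = 0. -/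
/-!
Put `a = Δ₁/2`, `b = Δ₂/2`, `c = Δ₃/2`, so `a + b + c = 0`. Over the common denominator
`sin (a - b) sin (b - c) sin (c - a)` the numerator of `ψ₁ + ψ₂ + ψ₃` is the cyclic sum
`∑ sin³ a · sin (b - c)`. Writing `4 sin³ a = 3 sin a - sin 3a` splits it into two cyclic sums:
`∑ sin a · sin (b - c)` vanishes identically, and when `a + b + c = 0` the product-to-sum formula
turns `2 sin 3a · sin (b - c)` into `cos 2(a - b) - cos 2(c - a)`, which telescopes.
-/

namespace Real

theorem sin_mul_sin_sub_cyclic_sum_eq_zero (a b c : ℝ) :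
    sin a * sin (b - c) + sin b * sin (c - a) + sin c * sin (a - b) = 0 := by
  simp only [sin_sub]
  ring

theorem two_mul_sin_three_mul_mul_sin_sub {x y z : ℝ} (h : x + y + z = 0) :
    2 * sin (3 * x) * sin (y - z) = cos (2 * (x - y)) - cos (2 * (z - x)) := by
  rw [two_mul_sin_mul_sin, ← cos_neg (3 * x + (y - z))]
  congr 2 <;> linarith

theorem sin_three_mul_mul_sin_sub_cyclic_sum_eq_zero {a b c : ℝ} (h : a + b + c = 0) :
    sin (3 * a) * sin (b - c) + sin (3 * b) * sin (c - a) + sin (3 * c) * sin (a - b) = 0 := by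
  linear_combination (two_mul_sin_three_mul_mul_sin_sub h
    + two_mul_sin_three_mul_mul_sin_sub (x := b) (y := c) (z := a) (by linear_combination h)
    + two_mul_sin_three_mul_mul_sin_sub (x := c) (y := a) (z := b) (by linear_combination h)) / 2

theorem sin_pow_three_mul_sin_sub_cyclic_sum_eq_zero {a b c : ℝ} (h : a + b + c = 0) :
    sin a ^ 3 * sin (b - c) + sin b ^ 3 * sin (c - a) + sin c ^ 3 * sin (a - b) = 0 := by
  linear_combination (3 / 4) * sin_mul_sin_sub_cyclic_sum_eq_zero a b c
    - (1 / 4) * sin_three_mul_mul_sin_sub_cyclic_sum_eq_zero h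
    + (sin (b - c) / 4) * sin_three_mul a + (sin (c - a) / 4) * sin_three_mul b
    + (sin (a - b) / 4) * sin_three_mul c

end Real

/-- For real `Δ₁ + Δ₂ + Δ₃ = 0` with nonvanishing pairwise
half-difference sines, the Koopman eigenfunctions satisfy `ψ₁ + ψ₂ + ψ₃ = 0`. -/
theorem koopman_eigenfunctions_sum_zero
    (Δ1 Δ2 Δ3 : ℝ) (hsum : Δ1 + Δ2 + Δ3 = 0)
    (h12 : Real.sin ((Δ1 - Δ2) / 2) ≠ 0)
    (h23 : Real.sin ((Δ2 - Δ3) / 2) ≠ 0)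
    (h31 : Real.sin ((Δ3 - Δ1) / 2) ≠ 0)
    (ψ1 ψ2 ψ3 : ℝ)
    (hψ1 : ψ1 = Real.sin (Δ1 / 2) ^ 3
      / (Real.sin ((Δ1 - Δ2) / 2) * Real.sin ((Δ3 - Δ1) / 2)))
    (hψ2 : ψ2 = Real.sin (Δ2 / 2) ^ 3
      / (Real.sin ((Δ2 - Δ3) / 2) * Real.sin ((Δ1 - Δ2) / 2)))
    (hψ3 : ψ3 = Real.sin (Δ3 / 2) ^ 3
      / (Real.sin ((Δ3 - Δ1) / 2) * Real.sin ((Δ2 - Δ3) / 2))) :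
    ψ1 + ψ2 + ψ3 = 0 := by
  have numerator_eq_zero := Real.sin_pow_three_mul_sin_sub_cyclic_sum_eq_zero
    (a := Δ1 / 2) (b := Δ2 / 2) (c := Δ3 / 2) (by linear_combination hsum / 2)
  simp only [← sub_div] at numerator_eq_zero
  rw [hψ1, hψ2, hψ3]
  field_simp
  linear_combination numerator_eq_zero
end

section
/- Let θ_1, θ_2, θ_3 : ℝ → ℝ be a solution of the identical Kuramoto model for N = 3 and let Δ_1 = θ_1 − θ_2, Δ_2 = θ_2 − θ_3, Δ_3 = θ_3 − θ_1. At every time t such that sin((Δ_1(t)−Δ_2(t))/2) ≠ 0, sin((Δ_2(t)−Δ_3(t))/2) ≠ 0, sin((Δ_3(t)−Δ_1(t))/2) ≠ 0 and sin(Δ_2(t)/2) ≠ 0, the ratio ψ_inv(t) = ψ_1(t)/ψ_2(t) is differentiable at t with derivative ψ_inv'(t) = 0, where ψ_1 = sin³(Δ_1/2)/(sin((Δ_1−Δ_2)/2)·sin((Δ_3−Δ_1)/2)) and ψ_2 = sin³(Δ_2/2)/(sin((Δ_2−Δ_3)/2)·sin((Δ_1−Δ_2)/2)). -/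
/-!
Pass to the half phase differences `a = Δ₁/2`, `b = Δ₂/2`. For each of `u = a`, `a - b`,
`-(2a + b)` the line `u = 0` is invariant, so `u' = μ_u · sin u` and `sin u` has the logarithmic
rate `λ_u = μ_u cos u`. Hence `ψ₁ = sin³ a / (sin (a - b) · sin (-(2a + b)))` has logarithmic
derivative `3λ_a - λ_{a-b} - λ_{-(2a+b)}`, which product-to-sum formulas collapse to `-K`. The
cyclic relabelling of the oscillators preserves the model and carries `ψ₁` to `ψ₂`, so both are
Koopman eigenfunctions with eigenvalue `-K` and their ratio is constant.
-/

open Real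

section EigenfunctionCalculus

variable {𝕜 : Type*} [NontriviallyNormedField 𝕜] {f g h : 𝕜 → 𝕜} {c p q r t : 𝕜}

theorem HasDerivAt.div_of_eq_const_mul (hf : HasDerivAt f (c * f t) t)
    (hg : HasDerivAt g (c * g t) t) (hg0 : g t ≠ 0) : HasDerivAt (fun s => f s / g s) 0 t :=
  (hf.fun_div hg hg0).congr_deriv (by ring)

theorem HasDerivAt.pow_div_mul_of_eq_mul (n : ℕ) (hf : HasDerivAt f (p * f t) t)
    (hg : HasDerivAt g (q * g t) t) (hh : HasDerivAt h (r * h t) t) (hg0 : g t ≠ 0)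
    (hh0 : h t ≠ 0) :
    HasDerivAt (fun s => f s ^ n / (g s * h s)) ((n * p - q - r) * (f t ^ n / (g t * h t))) t := by
  refine ((hf.fun_pow n).fun_div (hg.fun_mul hh) (mul_ne_zero hg0 hh0)).congr_deriv ?_
  cases n with
  | zero => field_simp; ring
  | succ n => field_simp; push_cast; ring

end EigenfunctionCalculus

theorem HasDerivAt.sin_of_eq_mul_sin {u : ℝ → ℝ} {m t : ℝ}
    (hu : HasDerivAt u (m * Real.sin (u t)) t) :
    HasDerivAt (fun s => Real.sin (u s)) (Real.cos (u t) * m * Real.sin (u t)) t := by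
  simpa only [mul_assoc] using hu.sin

namespace Kuramoto3

/-- With `a = (θ₁ - θ₂)/2` and `b = (θ₂ - θ₃)/2`, the model gives `a' = halfPhaseDiffRate K a b`
and `b' = halfPhaseDiffRate K b a`. -/
noncomputable def halfPhaseDiffRate (K a b : ℝ) : ℝ :=
  K / 6 * (sin (2 * b) - 2 * sin (2 * a) - sin (2 * (a + b)))

noncomputable def reducedPsi (a b : ℝ) : ℝ := sin a ^ 3 / (sin (a - b) * sin (-(2 * a + b)))

noncomputable def koopmanPsi (Δ₁ Δ₂ Δ₃ : ℝ) : ℝ :=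
  sin (Δ₁ / 2) ^ 3 / (sin ((Δ₁ - Δ₂) / 2) * sin ((Δ₃ - Δ₁) / 2))

theorem koopmanPsi_sub_sub_sub (x y z : ℝ) :
    koopmanPsi (x - y) (y - z) (z - x) = reducedPsi ((x - y) / 2) ((y - z) / 2) := by
  rw [koopmanPsi, reducedPsi]
  ring_nf

section RateIdentities

variable (K a b : ℝ)

theorem halfPhaseDiffRate_eq_mul_sin :
    halfPhaseDiffRate K a b = -(K / 3) * (2 * cos a + cos (a + 2 * b)) * sin a := by
  have h := two_mul_sin_mul_cos a (a + 2 * b)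
  rw [show a - (a + 2 * b) = -(2 * b) by ring, show a + (a + 2 * b) = 2 * (a + b) by ring,
    sin_neg] at h
  rw [halfPhaseDiffRate, sin_two_mul a]
  linear_combination (K / 6) * h

theorem halfPhaseDiffRate_sub_swap :
    halfPhaseDiffRate K a b - halfPhaseDiffRate K b a = -K * cos (a + b) * sin (a - b) := by
  have h := two_mul_sin_mul_cos (a - b) (a + b)
  rw [show a - b - (a + b) = -(2 * b) by ring, show a - b + (a + b) = 2 * a by ring,
    sin_neg] at h
  rw [halfPhaseDiffRate, halfPhaseDiffRate, add_comm b a]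
  linear_combination (K / 2) * h

theorem neg_two_mul_halfPhaseDiffRate_add_swap :
    -(2 * halfPhaseDiffRate K a b + halfPhaseDiffRate K b a) =
      -K * cos b * sin (-(2 * a + b)) := by
  have h := two_mul_sin_mul_cos (2 * a + b) b
  rw [show 2 * a + b - b = 2 * a by ring, show 2 * a + b + b = 2 * (a + b) by ring] at h
  rw [halfPhaseDiffRate, halfPhaseDiffRate, add_comm b a, sin_neg]
  linear_combination (-K / 2) * h

/-- The left side is `3λ_a - λ_{a-b} - λ_{-(2a+b)}`, with the rates `λ_u` read off from the three
lemmas above. -/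
theorem reducedPsi_eigenvalue :
    3 * (cos a * (-(K / 3) * (2 * cos a + cos (a + 2 * b)))) - cos (a - b) * (-K * cos (a + b))
      - cos (-(2 * a + b)) * (-K * cos b) = -K := by
  have h1 := two_mul_cos_mul_cos a (a + 2 * b)
  have h2 := two_mul_cos_mul_cos (a - b) (a + b)
  have h3 := two_mul_cos_mul_cos (2 * a + b) b
  rw [show a - (a + 2 * b) = -(2 * b) by ring, show a + (a + 2 * b) = 2 * (a + b) by ring,
    cos_neg] at h1
  rw [show a - b - (a + b) = -(2 * b) by ring, show a - b + (a + b) = 2 * a by ring,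
    cos_neg] at h2
  rw [show 2 * a + b - b = 2 * a by ring, show 2 * a + b + b = 2 * (a + b) by ring] at h3
  rw [cos_neg]
  linear_combination (-K / 2) * h1 + (K / 2) * h2 + (K / 2) * h3 + K * cos_two_mul a

end RateIdentities

theorem hasDerivAt_reducedPsi (K : ℝ) {a b : ℝ → ℝ} {t : ℝ}
    (ha : HasDerivAt a (halfPhaseDiffRate K (a t) (b t)) t)
    (hb : HasDerivAt b (halfPhaseDiffRate K (b t) (a t)) t)
    (hab : sin (a t - b t) ≠ 0) (hab' : sin (-(2 * a t + b t)) ≠ 0) :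
    HasDerivAt (fun s => reducedPsi (a s) (b s)) (-K * reducedPsi (a t) (b t)) t := by
  have hsa := (ha.congr_deriv (halfPhaseDiffRate_eq_mul_sin ..)).sin_of_eq_mul_sin
  have hsd := ((ha.fun_sub hb).congr_deriv (halfPhaseDiffRate_sub_swap ..)).sin_of_eq_mul_sin
  have hsm := (((ha.const_mul 2).fun_add hb).fun_neg.congr_deriv
    (neg_two_mul_halfPhaseDiffRate_add_swap ..)).sin_of_eq_mul_sin
  refine (hsa.pow_div_mul_of_eq_mul 3 hsd hsm hab hab').congr_deriv ?_
  rw [Nat.cast_ofNat, reducedPsi_eigenvalue, reducedPsi]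

section Phases

variable (K : ℝ) {ω : ℝ} {x y z : ℝ → ℝ} {t : ℝ}

theorem hasDerivAt_halfPhaseDiff₁₂
    (hx : HasDerivAt x (ω + K / 3 * (sin (y t - x t) + sin (z t - x t))) t)
    (hy : HasDerivAt y (ω + K / 3 * (sin (z t - y t) + sin (x t - y t))) t) :
    HasDerivAt (fun s => (x s - y s) / 2)
      (halfPhaseDiffRate K ((x t - y t) / 2) ((y t - z t) / 2)) t := by
  refine ((hx.fun_sub hy).div_const 2).congr_deriv ?_
  rw [halfPhaseDiffRate, mul_div_cancel₀ _ two_ne_zero, mul_div_cancel₀ _ two_ne_zero,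
    show 2 * ((x t - y t) / 2 + (y t - z t) / 2) = x t - z t by ring,
    ← neg_sub (x t) (y t), ← neg_sub (x t) (z t), ← neg_sub (y t) (z t), sin_neg, sin_neg,
    sin_neg]
  ring

theorem hasDerivAt_halfPhaseDiff₂₃
    (hy : HasDerivAt y (ω + K / 3 * (sin (z t - y t) + sin (x t - y t))) t)
    (hz : HasDerivAt z (ω + K / 3 * (sin (x t - z t) + sin (y t - z t))) t) :
    HasDerivAt (fun s => (y s - z s) / 2)
      (halfPhaseDiffRate K ((y t - z t) / 2) ((x t - y t) / 2)) t := by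
  refine ((hy.fun_sub hz).div_const 2).congr_deriv ?_
  rw [halfPhaseDiffRate, mul_div_cancel₀ _ two_ne_zero, mul_div_cancel₀ _ two_ne_zero,
    show 2 * ((y t - z t) / 2 + (x t - y t) / 2) = x t - z t by ring,
    ← neg_sub (y t) (z t), sin_neg]
  ring

/-- The hypotheses are invariant under the cyclic relabelling `x → y → z → x`, which carries `ψ₁`
to `ψ₂`. -/
theorem hasDerivAt_koopmanPsi
    (hx : HasDerivAt x (ω + K / 3 * (sin (y t - x t) + sin (z t - x t))) t)
    (hy : HasDerivAt y (ω + K / 3 * (sin (z t - y t) + sin (x t - y t))) t)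
    (hz : HasDerivAt z (ω + K / 3 * (sin (x t - z t) + sin (y t - z t))) t)
    (hxy : sin ((x t - y t - (y t - z t)) / 2) ≠ 0)
    (hzx : sin ((z t - x t - (x t - y t)) / 2) ≠ 0) :
    HasDerivAt (fun s => koopmanPsi (x s - y s) (y s - z s) (z s - x s))
      (-K * koopmanPsi (x t - y t) (y t - z t) (z t - x t)) t := by
  simp only [koopmanPsi_sub_sub_sub]
  refine hasDerivAt_reducedPsi K (hasDerivAt_halfPhaseDiff₁₂ K hx hy)
    (hasDerivAt_halfPhaseDiff₂₃ K hy hz) ?_ ?_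
  · convert hxy using 2; ring
  · convert hzx using 2; ring

end Phases

end Kuramoto3

open Kuramoto3

/-- For the identical Kuramoto model with `N = 3`, at every time `t`
where the denominators of `ψ₁` and `ψ₂` are nonvanishing and `sin(Δ₂/2) ≠ 0`,
the ratio `ψ_inv = ψ₁/ψ₂` is differentiable at `t` with derivative `0`. -/
theorem koopman_invariant_psi_inv
    (ω K : ℝ) (θ1 θ2 θ3 : ℝ → ℝ)
    (h1 : ∀ t : ℝ, HasDerivAt θ1
      (ω + K / 3 * (Real.sin (θ1 t - θ1 t) + Real.sin (θ2 t - θ1 t) + Real.sin (θ3 t - θ1 t))) t)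
    (h2 : ∀ t : ℝ, HasDerivAt θ2
      (ω + K / 3 * (Real.sin (θ1 t - θ2 t) + Real.sin (θ2 t - θ2 t) + Real.sin (θ3 t - θ2 t))) t)
    (h3 : ∀ t : ℝ, HasDerivAt θ3
      (ω + K / 3 * (Real.sin (θ1 t - θ3 t) + Real.sin (θ2 t - θ3 t) + Real.sin (θ3 t - θ3 t))) t)
    (Δ1 Δ2 Δ3 : ℝ → ℝ)
    (hΔ1 : ∀ t, Δ1 t = θ1 t - θ2 t)
    (hΔ2 : ∀ t, Δ2 t = θ2 t - θ3 t)
    (hΔ3 : ∀ t, Δ3 t = θ3 t - θ1 t)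
    (ψ1 ψ2 ψinv : ℝ → ℝ)
    (hψ1 : ∀ t, ψ1 t = Real.sin (Δ1 t / 2) ^ 3
      / (Real.sin ((Δ1 t - Δ2 t) / 2) * Real.sin ((Δ3 t - Δ1 t) / 2)))
    (hψ2 : ∀ t, ψ2 t = Real.sin (Δ2 t / 2) ^ 3
      / (Real.sin ((Δ2 t - Δ3 t) / 2) * Real.sin ((Δ1 t - Δ2 t) / 2)))
    (hψinv : ∀ t, ψinv t = ψ1 t / ψ2 t) :
    ∀ t : ℝ,
      Real.sin ((Δ1 t - Δ2 t) / 2) ≠ 0 →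
      Real.sin ((Δ2 t - Δ3 t) / 2) ≠ 0 →
      Real.sin ((Δ3 t - Δ1 t) / 2) ≠ 0 →
      Real.sin (Δ2 t / 2) ≠ 0 →
      HasDerivAt ψinv 0 t := by
  intro t h12 h23 h31 hΔ2_half
  obtain rfl : Δ1 = fun s => θ1 s - θ2 s := funext hΔ1
  obtain rfl : Δ2 = fun s => θ2 s - θ3 s := funext hΔ2
  obtain rfl : Δ3 = fun s => θ3 s - θ1 s := funext hΔ3
  obtain rfl : ψ1 = fun s => koopmanPsi (θ1 s - θ2 s) (θ2 s - θ3 s) (θ3 s - θ1 s) := funext hψ1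
  obtain rfl : ψ2 = fun s => koopmanPsi (θ2 s - θ3 s) (θ3 s - θ1 s) (θ1 s - θ2 s) := funext hψ2
  obtain rfl : ψinv = _ := funext hψinv
  have hθ1 : HasDerivAt θ1 (ω + K / 3 * (sin (θ2 t - θ1 t) + sin (θ3 t - θ1 t))) t :=
    (h1 t).congr_deriv (by rw [sub_self, sin_zero, zero_add])
  have hθ2 : HasDerivAt θ2 (ω + K / 3 * (sin (θ3 t - θ2 t) + sin (θ1 t - θ2 t))) t :=
    (h2 t).congr_deriv (by rw [sub_self, sin_zero, add_zero, add_comm (sin _)])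
  have hθ3 : HasDerivAt θ3 (ω + K / 3 * (sin (θ1 t - θ3 t) + sin (θ2 t - θ3 t))) t :=
    (h3 t).congr_deriv (by rw [sub_self, sin_zero, add_zero])
  exact (hasDerivAt_koopmanPsi K hθ1 hθ2 hθ3 h12 h31).div_of_eq_const_mul
    (hasDerivAt_koopmanPsi K hθ2 hθ3 hθ1 h23 h12)
    (div_ne_zero (pow_ne_zero 3 hΔ2_half) (mul_ne_zero h23 h12))
end

section
/- Let θ_1, θ_2, θ_3 : ℝ → ℝ be a solution of the identical Kuramoto model for N = 3, let Δ_1 = θ_1 − θ_2, Δ_2 = θ_2 − θ_3, Δ_3 = θ_3 − θ_1, and suppose that on an interval [0, T] all the quantities sin(Δ_j(t)/2) for j=1,2,3 and sin((Δ_j(t)−Δ_k(t))/2) for j≠k are nonzero. Define ψ_amp(t) = |ψ_1(t)·ψ_2(t)·ψ_3(t)|^{1/3}, where ψ_1, ψ_2, ψ_3 are the Koopman eigenfunctions. Then for all t ∈ [0, T], ψ_amp(t) = e^{−K·t}·ψ_amp(0); in particular, if K > 0 then ψ_amp is nonincreasing on [0, T]. -/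
/-!
Write `a, b, c` for the half phase differences `Δⱼ / 2`, so `a + b + c = 0`. Along the flow the
three sines in `ψ₁ = sin³ a / (sin (a - b) sin (c - a))` each grow at an explicit rate:
`(sin a)' = -(K/3) cos a (cos (b - c) + 2 cos a) · sin a`, `(sin (a - b))' = -K cos c cos (a - b) ·
sin (a - b)` and `(sin (c - a))' = -K cos b cos (c - a) · sin (c - a)`. Hence `ψ₁` grows at rate
`3 · rate (sin a) - rate (sin (a - b)) - rate (sin (c - a))`, which a trigonometric identity turns
into `-K`. By cyclic symmetry `ψ₂, ψ₃` are Koopman eigenfunctions with the same eigenvalue `-K`,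
so `ψ₁ψ₂ψ₃` decays like `e^{-3Kt}` and its cube root like `e^{-Kt}`.
-/

open Real Set

section Rates

variable {𝕜 : Type*} [NontriviallyNormedField 𝕜] {f g : 𝕜 → 𝕜} {α β t : 𝕜}

theorem HasDerivAt.mul_rate (hf : HasDerivAt f (α * f t) t) (hg : HasDerivAt g (β * g t) t) :
    HasDerivAt (fun s => f s * g s) ((α + β) * (f t * g t)) t :=
  (hf.fun_mul hg).congr_deriv (by ring)

theorem HasDerivAt.pow_rate (hf : HasDerivAt f (α * f t) t) (n : ℕ) :
    HasDerivAt (fun s => f s ^ n) (n * α * f t ^ n) t := by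
  refine (hf.fun_pow n).congr_deriv ?_
  cases n with
  | zero => simp
  | succ n => rw [Nat.add_sub_cancel, pow_succ]; push_cast; ring

theorem HasDerivAt.div_rate (hf : HasDerivAt f (α * f t) t) (hg : HasDerivAt g (β * g t) t)
    (hg0 : g t ≠ 0) : HasDerivAt (fun s => f s / g s) ((α - β) * (f t / g t)) t := by
  refine (hf.fun_div hg hg0).congr_deriv ?_
  field_simp

end Rates

theorem eq_exp_mul_of_hasDerivAt {f : ℝ → ℝ} {c a b : ℝ}
    (hf : ∀ t ∈ Icc a b, HasDerivAt f (c * f t) t) :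
    ∀ t ∈ Icc a b, f t = exp (c * (t - a)) * f a := by
  have hg : ∀ t ∈ Icc a b, HasDerivAt (fun s => exp (-(c * (s - a))) * f s) 0 t := by
    intro t ht
    have he := (((hasDerivAt_id t).sub_const a).const_mul c).neg.exp
    exact (he.fun_mul (hf t ht)).congr_deriv (by simp only [id]; ring)
  have hconst := constant_of_has_deriv_right_zero
    (fun s hs => (hg s hs).continuousAt.continuousWithinAt)
    (fun s hs => (hg s (Ico_subset_Icc_self hs)).hasDerivWithinAt)
  intro t ht
  have h := hconst t ht
  simp only [sub_self, mul_zero, neg_zero, exp_zero, one_mul] at h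
  rw [← h, ← mul_assoc, ← exp_add, add_neg_cancel, exp_zero, one_mul]

theorem abs_exp_mul_rpow (c p r : ℝ) : |exp c * p| ^ r = exp (c * r) * |p| ^ r := by
  rw [abs_mul, abs_of_pos (exp_pos c), mul_rpow (exp_pos c).le (abs_nonneg p), ← exp_mul]

section Kuramoto

variable (ω K : ℝ)

noncomputable def kuramotoVel (p x y z : ℝ) : ℝ :=
  ω + K / 3 * (sin (x - p) + sin (y - p) + sin (z - p))

theorem kuramotoVel_rotate (p x y z : ℝ) : kuramotoVel ω K p x y z = kuramotoVel ω K p y z x := by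
  unfold kuramotoVel
  ring

theorem kuramotoVel_sub_div_two (x y z : ℝ) :
    (kuramotoVel ω K x x y z - kuramotoVel ω K y x y z) / 2 =
      -K / 3 * (cos ((y - z) / 2 - (z - x) / 2) + 2 * cos ((x - y) / 2)) * sin ((x - y) / 2) := by
  obtain ⟨a, rfl⟩ : ∃ a, x = y + 2 * a := ⟨(x - y) / 2, by ring⟩
  obtain ⟨b, rfl⟩ : ∃ b, z = y - 2 * b := ⟨(y - z) / 2, by ring⟩
  unfold kuramotoVel
  ring_nf
  simp only [sin_neg, cos_neg, sin_sub, cos_add, mul_comm _ (2 : ℝ), sin_two_mul, cos_two_mul]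
  linear_combination (-K * cos b * sin b * (2 / 3)) * sin_sq_add_cos_sq a

theorem kuramotoVel_sub_sub_div_two (x y z : ℝ) :
    ((kuramotoVel ω K x x y z - kuramotoVel ω K y x y z) -
      (kuramotoVel ω K y x y z - kuramotoVel ω K z x y z)) / 2 =
      -K * cos ((z - x) / 2) * sin ((x - y - (y - z)) / 2) := by
  obtain ⟨a, rfl⟩ : ∃ a, x = y + 2 * a := ⟨(x - y) / 2, by ring⟩
  obtain ⟨b, rfl⟩ : ∃ b, z = y - 2 * b := ⟨(y - z) / 2, by ring⟩
  unfold kuramotoVel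
  ring_nf
  simp only [sin_neg, cos_neg, sin_sub, cos_sub, sin_add, mul_comm _ (2 : ℝ), sin_two_mul,
    cos_two_mul]
  linear_combination (K * sin a * cos a) * sin_sq_add_cos_sq b -
    (K * cos b * sin b) * sin_sq_add_cos_sq a

theorem koopman_rate_identity (x y z : ℝ) :
    cos ((x - y) / 2) * (cos ((y - z) / 2 - (z - x) / 2) + 2 * cos ((x - y) / 2))
      - cos ((z - x) / 2) * cos ((x - y - (y - z)) / 2)
      - cos ((y - z) / 2) * cos ((z - x - (x - y)) / 2) = 1 := by
  obtain ⟨a, rfl⟩ : ∃ a, x = y + 2 * a := ⟨(x - y) / 2, by ring⟩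
  obtain ⟨b, rfl⟩ : ∃ b, z = y - 2 * b := ⟨(y - z) / 2, by ring⟩
  ring_nf
  simp only [sin_neg, cos_neg, cos_sub, cos_add, mul_comm _ (2 : ℝ), sin_two_mul, cos_two_mul]
  linear_combination sin b ^ 2 * sin_sq_add_cos_sq a + (1 - cos a ^ 2) * sin_sq_add_cos_sq b

def IsKuramoto3Solution (x y z : ℝ → ℝ) : Prop :=
  ∀ t, HasDerivAt x (kuramotoVel ω K (x t) (x t) (y t) (z t)) t ∧
    HasDerivAt y (kuramotoVel ω K (y t) (x t) (y t) (z t)) t ∧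
    HasDerivAt z (kuramotoVel ω K (z t) (x t) (y t) (z t)) t

/-- `ψ₁` in terms of the phases; `ψ₂` and `ψ₃` are its cyclic rotations. -/
noncomputable def koopmanEigen (x y z : ℝ) : ℝ :=
  sin ((x - y) / 2) ^ 3 / (sin ((x - y - (y - z)) / 2) * sin ((z - x - (x - y)) / 2))

variable {ω K} {x y z : ℝ → ℝ}

theorem IsKuramoto3Solution.rotate (h : IsKuramoto3Solution ω K x y z) :
    IsKuramoto3Solution ω K y z x := fun t => by
  obtain ⟨hx, hy, hz⟩ := h t
  simp only [kuramotoVel_rotate ω K _ (x t)] at hx hy hz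
  exact ⟨hy, hz, hx⟩

theorem IsKuramoto3Solution.hasDerivAt_sin_half_sub (h : IsKuramoto3Solution ω K x y z) (t : ℝ) :
    HasDerivAt (fun s => sin ((x s - y s) / 2))
      (-K / 3 * cos ((x t - y t) / 2) *
        (cos ((y t - z t) / 2 - (z t - x t) / 2) + 2 * cos ((x t - y t) / 2)) *
        sin ((x t - y t) / 2)) t := by
  obtain ⟨hx, hy, -⟩ := h t
  refine ((hx.fun_sub hy).div_const 2).sin.congr_deriv ?_
  rw [kuramotoVel_sub_div_two]
  ring

theorem IsKuramoto3Solution.hasDerivAt_sin_half_sub_sub (h : IsKuramoto3Solution ω K x y z)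
    (t : ℝ) :
    HasDerivAt (fun s => sin ((x s - y s - (y s - z s)) / 2))
      (-K * cos ((z t - x t) / 2) * cos ((x t - y t - (y t - z t)) / 2) *
        sin ((x t - y t - (y t - z t)) / 2)) t := by
  obtain ⟨hx, hy, hz⟩ := h t
  refine (((hx.fun_sub hy).fun_sub (hy.fun_sub hz)).div_const 2).sin.congr_deriv ?_
  rw [kuramotoVel_sub_sub_div_two]
  ring

theorem IsKuramoto3Solution.hasDerivAt_koopmanEigen (h : IsKuramoto3Solution ω K x y z) {t : ℝ}
    (hu : sin ((x t - y t - (y t - z t)) / 2) ≠ 0)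
    (hv : sin ((z t - x t - (x t - y t)) / 2) ≠ 0) :
    HasDerivAt (fun s => koopmanEigen (x s) (y s) (z s))
      (-K * koopmanEigen (x t) (y t) (z t)) t := by
  have := ((h.hasDerivAt_sin_half_sub t).pow_rate 3).div_rate
    ((h.hasDerivAt_sin_half_sub_sub t).mul_rate (h.rotate.rotate.hasDerivAt_sin_half_sub_sub t))
    (mul_ne_zero hu hv)
  refine this.congr_deriv (congrArg (· * koopmanEigen (x t) (y t) (z t)) ?_)
  push_cast
  linear_combination (-K) * koopman_rate_identity (x t) (y t) (z t)

end Kuramoto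

/-- For the identical Kuramoto model with `N = 3`, on an interval
`[0, T]` where all `sin(Δⱼ/2)` and `sin((Δⱼ−Δₖ)/2)` (`j ≠ k`) are nonvanishing,
the amplitude `ψ_amp = |ψ₁ψ₂ψ₃|^{1/3}` satisfies
`ψ_amp(t) = e^{−K t}·ψ_amp(0)`; in particular, if `K > 0` then `ψ_amp` is
nonincreasing on `[0, T]`. -/
theorem koopman_amplitude_decay
    (ω K T : ℝ) (θ1 θ2 θ3 : ℝ → ℝ)
    (h1 : ∀ t : ℝ, HasDerivAt θ1
      (ω + K / 3 * (Real.sin (θ1 t - θ1 t) + Real.sin (θ2 t - θ1 t) + Real.sin (θ3 t - θ1 t))) t)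
    (h2 : ∀ t : ℝ, HasDerivAt θ2
      (ω + K / 3 * (Real.sin (θ1 t - θ2 t) + Real.sin (θ2 t - θ2 t) + Real.sin (θ3 t - θ2 t))) t)
    (h3 : ∀ t : ℝ, HasDerivAt θ3
      (ω + K / 3 * (Real.sin (θ1 t - θ3 t) + Real.sin (θ2 t - θ3 t) + Real.sin (θ3 t - θ3 t))) t)
    (Δ1 Δ2 Δ3 : ℝ → ℝ)
    (hΔ1 : ∀ t, Δ1 t = θ1 t - θ2 t)
    (hΔ2 : ∀ t, Δ2 t = θ2 t - θ3 t)
    (hΔ3 : ∀ t, Δ3 t = θ3 t - θ1 t)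
    (hreg : ∀ t ∈ Set.Icc (0 : ℝ) T,
      Real.sin (Δ1 t / 2) ≠ 0 ∧ Real.sin (Δ2 t / 2) ≠ 0 ∧ Real.sin (Δ3 t / 2) ≠ 0 ∧
      Real.sin ((Δ1 t - Δ2 t) / 2) ≠ 0 ∧ Real.sin ((Δ2 t - Δ3 t) / 2) ≠ 0 ∧
      Real.sin ((Δ3 t - Δ1 t) / 2) ≠ 0)
    (ψ1 ψ2 ψ3 ψamp : ℝ → ℝ)
    (hψ1 : ∀ t, ψ1 t = Real.sin (Δ1 t / 2) ^ 3
      / (Real.sin ((Δ1 t - Δ2 t) / 2) * Real.sin ((Δ3 t - Δ1 t) / 2)))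
    (hψ2 : ∀ t, ψ2 t = Real.sin (Δ2 t / 2) ^ 3
      / (Real.sin ((Δ2 t - Δ3 t) / 2) * Real.sin ((Δ1 t - Δ2 t) / 2)))
    (hψ3 : ∀ t, ψ3 t = Real.sin (Δ3 t / 2) ^ 3
      / (Real.sin ((Δ3 t - Δ1 t) / 2) * Real.sin ((Δ2 t - Δ3 t) / 2)))
    (hψamp : ∀ t, ψamp t = |ψ1 t * ψ2 t * ψ3 t| ^ ((1 : ℝ) / 3)) :
    (∀ t ∈ Set.Icc (0 : ℝ) T, ψamp t = Real.exp (-K * t) * ψamp 0) ∧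
    (0 < K → AntitoneOn ψamp (Set.Icc (0 : ℝ) T)) := by
  have hsol : IsKuramoto3Solution ω K θ1 θ2 θ3 := fun t => ⟨h1 t, h2 t, h3 t⟩
  obtain rfl : Δ1 = fun t => θ1 t - θ2 t := funext hΔ1
  obtain rfl : Δ2 = fun t => θ2 t - θ3 t := funext hΔ2
  obtain rfl : Δ3 = fun t => θ3 t - θ1 t := funext hΔ3
  have hP : ∀ t ∈ Icc 0 T, HasDerivAt (fun s => ψ1 s * ψ2 s * ψ3 s)
      ((-K + -K + -K) * (ψ1 t * ψ2 t * ψ3 t)) t := by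
    intro t ht
    obtain ⟨-, -, -, h12, h23, h31⟩ := hreg t ht
    rw [funext hψ1, funext hψ2, funext hψ3]
    exact ((hsol.hasDerivAt_koopmanEigen h12 h31).mul_rate
      (hsol.rotate.hasDerivAt_koopmanEigen h23 h12)).mul_rate
      (hsol.rotate.rotate.hasDerivAt_koopmanEigen h31 h23)
  have hamp : ∀ t ∈ Icc 0 T, ψamp t = exp (-K * t) * ψamp 0 := by
    intro t ht
    rw [hψamp, hψamp, eq_exp_mul_of_hasDerivAt hP t ht, abs_exp_mul_rpow]
    ring_nf
  refine ⟨hamp, fun hK s hs t ht hst => ?_⟩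
  rw [hamp s hs, hamp t ht]
  exact mul_le_mul_of_nonneg_right (exp_le_exp.mpr (by nlinarith)) (by rw [hψamp]; positivity)
end

section
/- Let Δ_1, Δ_2, Δ_3 be real numbers with Δ_1 + Δ_2 + Δ_3 = 0, suppose sin((Δ_1 − Δ_2)/2) ≠ 0 and sin((Δ_3 − Δ_1)/2) ≠ 0, and set ψ_1 = sin³(Δ_1/2)/(sin((Δ_1 − Δ_2)/2)·sin((Δ_3 − Δ_1)/2)). Let X_1 = exp(i·Δ_1) and X_2 = exp(i·Δ_2). Then 2i·ψ_1·(X_1 − X_2)·(1 − X_1²·X_2) − (X_1 − 1)³·X_2 = 0. -/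
open Complex in
/-- With `Δ₁ + Δ₂ + Δ₃ = 0`, nonvanishing denominators,
`ψ₁ = sin³(Δ₁/2)/(sin((Δ₁−Δ₂)/2)·sin((Δ₃−Δ₁)/2))`, `X₁ = e^{iΔ₁}`,
`X₂ = e^{iΔ₂}`, the polynomial relation (P1) holds:
`2iψ₁(X₁−X₂)(1−X₁²X₂) − (X₁−1)³X₂ = 0`. -/
theorem polynomial_relation_P1
    (Δ1 Δ2 Δ3 : ℝ) (hsum : Δ1 + Δ2 + Δ3 = 0)
    (h12 : Real.sin ((Δ1 - Δ2) / 2) ≠ 0)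
    (h31 : Real.sin ((Δ3 - Δ1) / 2) ≠ 0)
    (ψ1 : ℝ)
    (hψ1 : ψ1 = Real.sin (Δ1 / 2) ^ 3
      / (Real.sin ((Δ1 - Δ2) / 2) * Real.sin ((Δ3 - Δ1) / 2)))
    (X1 X2 : ℂ)
    (hX1 : X1 = Complex.exp (I * (Δ1 : ℂ)))
    (hX2 : X2 = Complex.exp (I * (Δ2 : ℂ))) :
    2 * I * (ψ1 : ℂ) * (X1 - X2) * (1 - X1 ^ 2 * X2) - (X1 - 1) ^ 3 * X2 = 0 := by
  have h3 : Δ3 = -Δ1 - Δ2 := by linarith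
  set a : ℂ := Complex.exp ((Δ1 : ℂ) / 2 * I) with ha_def
  set b : ℂ := Complex.exp ((Δ2 : ℂ) / 2 * I) with hb_def
  have ha : a ≠ 0 := Complex.exp_ne_zero _
  have hb : b ≠ 0 := Complex.exp_ne_zero _
  have hI : (2 * I : ℂ) ≠ 0 := by simp [Complex.I_ne_zero]
  have hX1' : X1 = a ^ 2 := by
    rw [hX1, ha_def, sq, ← Complex.exp_add]; congr 1; ring
  have hX2' : X2 = b ^ 2 := by
    rw [hX2, hb_def, sq, ← Complex.exp_add]; congr 1; ring
  have hs : ∀ x : ℝ, (Real.sin x : ℂ)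
      = (Complex.exp ((x : ℂ) * I) - Complex.exp (-(x : ℂ) * I)) / (2 * I) := by
    intro x
    rw [Complex.ofReal_sin, eq_div_iff hI]
    linear_combination I * Complex.two_sin (x : ℂ)
      + (Complex.exp (-(x : ℂ) * I) - Complex.exp ((x : ℂ) * I)) * Complex.I_sq
  have hs1 : (Real.sin (Δ1 / 2) : ℂ) = (a - a⁻¹) / (2 * I) := by
    have A : Complex.exp ((↑(Δ1 / 2) : ℂ) * I) = a := by
      rw [ha_def]; congr 1; push_cast; ring
    have B : Complex.exp (-(↑(Δ1 / 2) : ℂ) * I) = a⁻¹ := by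
      rw [ha_def, ← Complex.exp_neg]; congr 1; push_cast; ring
    rw [hs, A, B]
  have hab : a * b⁻¹ = Complex.exp ((↑((Δ1 - Δ2) / 2) : ℂ) * I) := by
    rw [ha_def, hb_def, ← Complex.exp_neg, ← Complex.exp_add]; congr 1; push_cast; ring
  have hs12 : (Real.sin ((Δ1 - Δ2) / 2) : ℂ) = (a * b⁻¹ - a⁻¹ * b) / (2 * I) := by
    have B : a⁻¹ * b = Complex.exp (-(↑((Δ1 - Δ2) / 2) : ℂ) * I) := by
      rw [ha_def, hb_def, ← Complex.exp_neg, ← Complex.exp_add]; congr 1; push_cast; ring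
    rw [hs, hab, B]
  have he1 : (a ^ 2 * b : ℂ) = Complex.exp (-(↑((Δ3 - Δ1) / 2) : ℂ) * I) := by
    rw [ha_def, hb_def, sq, ← Complex.exp_add, ← Complex.exp_add]; congr 1
    rw [h3]; push_cast; ring
  have hs31 : (Real.sin ((Δ3 - Δ1) / 2) : ℂ) = ((a ^ 2 * b)⁻¹ - a ^ 2 * b) / (2 * I) := by
    have A : ((a ^ 2 * b)⁻¹ : ℂ) = Complex.exp ((↑((Δ3 - Δ1) / 2) : ℂ) * I) := by
      rw [he1, ← Complex.exp_neg]; congr 1; ring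
    rw [hs, A, he1]
  have h12c : (a * b⁻¹ - a⁻¹ * b : ℂ) ≠ 0 := by
    intro h
    apply h12
    rw [h, zero_div] at hs12
    exact_mod_cast hs12
  have h31c : ((a ^ 2 * b)⁻¹ - a ^ 2 * b : ℂ) ≠ 0 := by
    intro h
    apply h31
    rw [h, zero_div] at hs31
    exact_mod_cast hs31
  have hψc : (ψ1 : ℂ) = ((a - a⁻¹) / (2 * I)) ^ 3
      / ((a * b⁻¹ - a⁻¹ * b) / (2 * I) * (((a ^ 2 * b)⁻¹ - a ^ 2 * b) / (2 * I))) := by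
    rw [hψ1, Complex.ofReal_div, Complex.ofReal_pow, Complex.ofReal_mul, hs1, hs12, hs31]
  have hB : a * b⁻¹ - a⁻¹ * b = (a ^ 2 - b ^ 2) * (a * b)⁻¹ := by field_simp
  have hC : (a ^ 2 * b)⁻¹ - a ^ 2 * b = (1 - a ^ 4 * b ^ 2) * (a ^ 2 * b)⁻¹ := by
    field_simp
  have h12p : a ^ 2 - b ^ 2 ≠ 0 := by
    intro h
    apply h12c
    rw [hB, h, zero_mul]
  have h31p : 1 - a ^ 4 * b ^ 2 ≠ 0 := by
    intro h
    apply h31c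
    rw [hC, h, zero_mul]
  have hIne : (I : ℂ) ≠ 0 := Complex.I_ne_zero
  rw [hψc, hB, hC, hX1', hX2']
  field_simp
  ring
end

section
/- Let ψ_1, ψ_2 ∈ ℂ with ψ_1 ≠ 0, and let X_1, X_2 ∈ ℂ with X_1 ≠ 0 and X_1 ≠ 1 satisfy both 2iψ_1(X_1−X_2)(1−X_1²X_2) − (X_1−1)³X_2 = 0 and 2iψ_2(X_2−X_1)(1−X_1X_2²) − (X_2−1)³X_1 = 0. Then R_1(X_1) = 0, where R_1(X) = a_4X⁴ + a_3X³ + a_2X² + a_1X + a_0 with a_4 = (2ψ_1−i)²(2ψ_2+i)(2ψ_1+2ψ_2−i), a_3 = 4(ψ_1+i)(2ψ_1−i)(2ψ_2+i)(2ψ_1+2ψ_2−i), a_2 = 6(8ψ_1³ψ_2 + 8ψ_1²ψ_2² − 4ψ_1² − 4ψ_1ψ_2 − 4ψ_2² − 1), a_1 = 4(ψ_1−i)(2ψ_1+i)(2ψ_2−i)(2ψ_1+2ψ_2+i), a_0 = (2ψ_1+i)²(2ψ_2−i)(2ψ_1+2ψ_2+i). -/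
set_option maxRecDepth 100000 in
set_option maxHeartbeats 2000000 in
open Complex in
/-- If `ψ₁ ≠ 0` and `X₁ ≠ 0`, `X₁ ≠ 1` and `(X₁, X₂)` satisfies
both polynomial relations (P1) and (P2), then `X₁` is a root of the quartic
`R₁(X) = a₄X⁴ + a₃X³ + a₂X² + a₁X + a₀`. -/
theorem quartic_from_P1_P2
    (ψ1 ψ2 : ℂ) (hψ1 : ψ1 ≠ 0)
    (X1 X2 : ℂ) (hX1ne0 : X1 ≠ 0) (hX1ne1 : X1 ≠ 1)
    (hP1 : 2 * I * ψ1 * (X1 - X2) * (1 - X1 ^ 2 * X2) - (X1 - 1) ^ 3 * X2 = 0)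
    (hP2 : 2 * I * ψ2 * (X2 - X1) * (1 - X1 * X2 ^ 2) - (X2 - 1) ^ 3 * X1 = 0) :
    (2 * ψ1 - I) ^ 2 * (2 * ψ2 + I) * (2 * ψ1 + 2 * ψ2 - I) * X1 ^ 4
      + 4 * (ψ1 + I) * (2 * ψ1 - I) * (2 * ψ2 + I) * (2 * ψ1 + 2 * ψ2 - I) * X1 ^ 3
      + 6 * (8 * ψ1 ^ 3 * ψ2 + 8 * ψ1 ^ 2 * ψ2 ^ 2 - 4 * ψ1 ^ 2 - 4 * ψ1 * ψ2
          - 4 * ψ2 ^ 2 - 1) * X1 ^ 2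
      + 4 * (ψ1 - I) * (2 * ψ1 + I) * (2 * ψ2 - I) * (2 * ψ1 + 2 * ψ2 + I) * X1
      + (2 * ψ1 + I) ^ 2 * (2 * ψ2 - I) * (2 * ψ1 + 2 * ψ2 + I) = 0 := by
  have hX1 : X1 - 1 ≠ 0 := sub_ne_zero.mpr hX1ne1
  have h2 : ((8) * ψ1^2 * ψ2 * X1^5 * I + (-8) * ψ1^2 * ψ2 * X1^4 * X2 * I + (-8) * ψ1^2 * ψ2 * X1^2 * I + (8) * ψ1^2 * ψ2 * X1 * X2 * I + (4) * ψ1^2 * X1^7 * X2 + (-12) * ψ1^2 * X1^6 * X2 + (12) * ψ1^2 * X1^5 * X2 + (-8) * ψ1^2 * X1^5 + (4) * ψ1^2 * X1^4 * X2 + (12) * ψ1^2 * X1^4 + (-12) * ψ1^2 * X1^3 * X2 + (-4) * ψ1^2 * X1^2 + (4) * ψ1^2 * X1 * X2 + (4) * ψ1 * ψ2 * X1^7 * X2 + (-12) * ψ1 * ψ2 * X1^6 * X2 + (12) * ψ1 * ψ2 * X1^5 * X2 + (-4) * ψ1 * ψ2 * X1^5 + (4) * ψ1 * ψ2 * X1^4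 * X2 + (12) * ψ1 * ψ2 * X1^4 + (-24) * ψ1 * ψ2 * X1^3 * X2 + (-12) * ψ1 * ψ2 * X1^3 + (24) * ψ1 * ψ2 * X1^2 * X2 + (4) * ψ1 * ψ2 * X1^2 + (-8) * ψ1 * ψ2 * X1 * X2 + (-4) * ψ1 * X1^7 * X2 * I + (18) * ψ1 * X1^6 * X2 * I + (-30) * ψ1 * X1^5 * X2 * I + (2) * ψ1 * X1^5 * I + (18) * ψ1 * X1^4 * X2 * I + (-6) * ψ1 * X1^4 * I + (6) * ψ1 * X1^3 * X2 * I + (6) * ψ1 * X1^3 * I + (-12) * ψ1 * X1^2 * X2 * I + (-2) * ψ1 * X1^2 * I + (4) * ψ1 * X1 * X2 * I + (-2) * ψ2 * X1^7 * X2 * I + (12) * ψ2 * X1^6 * X2 * I + (-30) * ψ2 * X1^5 * X2 * I + (40) * ψ2 * X1^4 * X2 * I + (-30) * ψ2 * X1^3 * X2 * I + (12) * ψ2 * X1^2 * X2 * I + (-2) * ψ2 * X1 * X2 * I + (-1) * X1^7 * X2 + (6) * X1^6 * X2 + (-15) * X1^5 * X2 + (20) * X1^4 * X2 + (-15) * X1^3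 * X2 + (6) * X1^2 * X2 + (-1) * X1 * X2) = 0 := by
    linear_combination ((-4) * ψ1^2 * X1^4) * hP2 - ((4) * ψ1 * ψ2 * X1^3 * X2 + (4) * ψ1 * ψ2 * X1 + (-2) * ψ1 * X1^4 * I + (-2) * ψ1 * X1^3 * X2 * I + (6) * ψ1 * X1^3 * I + (-2) * ψ1 * X1 * I + (-2) * ψ2 * X1^4 * I + (6) * ψ2 * X1^3 * I + (-6) * ψ2 * X1^2 * I + (2) * ψ2 * X1 * I + (-1) * X1^4 + (3) * X1^3 + (-3) * X1^2 + (1) * X1) * hP1 - ((-4) * ψ1^2 * X1^7 * X2 + (12) * ψ1^2 * X1^6 * X2 + (4) * ψ1^2 * X1^5 * X2^3 + (-12) * ψ1^2 * X1^5 * X2^2 + (4) * ψ1^2 * X1^5 + (-4) * ψ1^2 * X1^4 * X2 + (-12) * ψ1^2 * X1^4 + (12) * ψ1^2 * X1^3 * X2 + (4) * ψ1^2 * X1^2 + (-4) * ψ1^2 * X1 * X2 + (-4) * ψ1 * ψ2 * X1^7 * X2 + (4) * ψ1 * ψ2 * X1^6 * X2^2 + (12) * ψ1 * ψ2 * X1^6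 * X2 + (-12) * ψ1 * ψ2 * X1^5 * X2^2 + (-12) * ψ1 * ψ2 * X1^5 * X2 + (4) * ψ1 * ψ2 * X1^5 + (12) * ψ1 * ψ2 * X1^4 * X2^2 + (-12) * ψ1 * ψ2 * X1^4 + (-4) * ψ1 * ψ2 * X1^3 * X2^2 + (12) * ψ1 * ψ2 * X1^3 * X2 + (12) * ψ1 * ψ2 * X1^3 + (-12) * ψ1 * ψ2 * X1^2 * X2 + (-4) * ψ1 * ψ2 * X1^2 + (4) * ψ1 * ψ2 * X1 * X2) * Complex.I_sq
  have h3 : ψ1 ^ 2 * X1 ^ 6 * (X1 - 1) ^ 5 *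
      ((2 * ψ1 - I) ^ 2 * (2 * ψ2 + I) * (2 * ψ1 + 2 * ψ2 - I) * X1 ^ 4
      + 4 * (ψ1 + I) * (2 * ψ1 - I) * (2 * ψ2 + I) * (2 * ψ1 + 2 * ψ2 - I) * X1 ^ 3
      + 6 * (8 * ψ1 ^ 3 * ψ2 + 8 * ψ1 ^ 2 * ψ2 ^ 2 - 4 * ψ1 ^ 2 - 4 * ψ1 * ψ2
          - 4 * ψ2 ^ 2 - 1) * X1 ^ 2
      + 4 * (ψ1 - I) * (2 * ψ1 + I) * (2 * ψ2 - I) * (2 * ψ1 + 2 * ψ2 + I) * X1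
      + (2 * ψ1 + I) ^ 2 * (2 * ψ2 - I) * (2 * ψ1 + 2 * ψ2 + I)) = 0 := by
    linear_combination (-1/4 : ℂ) * ((-64) * ψ1^4 * ψ2^2 * X1^8 + (128) * ψ1^4 * ψ2^2 * X1^5 + (-64) * ψ1^4 * ψ2^2 * X1^2 + (-64) * ψ1^4 * ψ2 * X1^11 * I + (192) * ψ1^4 * ψ2 * X1^10 * I + (-192) * ψ1^4 * ψ2 * X1^9 * I + (192) * ψ1^4 * ψ2 * X1^6 * I + (-192) * ψ1^4 * ψ2 * X1^4 * I + (64) * ψ1^4 * ψ2 * X1^2 * I + (16) * ψ1^4 * X1^14 + (-96) * ψ1^4 * X1^13 + (240) * ψ1^4 * X1^12 + (-256) * ψ1^4 * X1^11 + (-48) * ψ1^4 * X1^10 + (384) * ψ1^4 * X1^9 + (-240) * ψ1^4 * X1^8 + (-192) * ψ1^4 * X1^7 + (240) * ψ1^4 * X1^6 + (32) * ψ1^4 * X1^5 + (-96) * ψ1^4 * X1^4 + (16) * ψ1^4 * X1^2 + (-64) * ψ1^3 * ψ2^2 * X1^11 * I + (192) * ψ1^3 * ψ2^2 * X1^10 *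 I + (-192) * ψ1^3 * ψ2^2 * X1^9 * I + (192) * ψ1^3 * ψ2^2 * X1^7 * I + (-192) * ψ1^3 * ψ2^2 * X1^6 * I + (192) * ψ1^3 * ψ2^2 * X1^5 * I + (-384) * ψ1^3 * ψ2^2 * X1^4 * I + (384) * ψ1^3 * ψ2^2 * X1^3 * I + (-128) * ψ1^3 * ψ2^2 * X1^2 * I + (32) * ψ1^3 * ψ2 * X1^14 + (-192) * ψ1^3 * ψ2 * X1^13 + (480) * ψ1^3 * ψ2 * X1^12 + (-576) * ψ1^3 * ψ2 * X1^11 + (96) * ψ1^3 * ψ2 * X1^10 + (768) * ψ1^3 * ψ2 * X1^9 + (-1088) * ψ1^3 * ψ2 * X1^8 + (192) * ψ1^3 * ψ2 * X1^7 + (960) * ψ1^3 * ψ2 * X1^6 + (-832) * ψ1^3 * ψ2 * X1^5 + (-96) * ψ1^3 * ψ2 * X1^4 + (384) * ψ1^3 * ψ2 * X1^3 + (-128) * ψ1^3 * ψ2 * X1^2 + (-32) * ψ1^3 * X1^14 * I + (240) * ψ1^3 * X1^13 * I + (-768) * ψ1^3 * X1^12 * I + (1264) * ψ1^3 * X1^11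 * I + (-864) * ψ1^3 * X1^10 * I + (-480) * ψ1^3 * X1^9 * I + (1296) * ψ1^3 * X1^8 * I + (-624) * ψ1^3 * X1^7 * I + (-384) * ψ1^3 * X1^6 * I + (464) * ψ1^3 * X1^5 * I + (-48) * ψ1^3 * X1^4 * I + (-96) * ψ1^3 * X1^3 * I + (32) * ψ1^3 * X1^2 * I + (16) * ψ1^2 * ψ2^2 * X1^14 + (-96) * ψ1^2 * ψ2^2 * X1^13 + (240) * ψ1^2 * ψ2^2 * X1^12 + (-288) * ψ1^2 * ψ2^2 * X1^11 + (48) * ψ1^2 * ψ2^2 * X1^10 + (384) * ψ1^2 * ψ2^2 * X1^9 + (-528) * ψ1^2 * ψ2^2 * X1^8 + (-96) * ψ1^2 * ψ2^2 * X1^7 + (1248) * ψ1^2 * ψ2^2 * X1^6 + (-1888) * ψ1^2 * ψ2^2 * X1^5 + (1440) * ψ1^2 * ψ2^2 * X1^4 + (-576) * ψ1^2 * ψ2^2 * X1^3 + (96) * ψ1^2 * ψ2^2 * X1^2 + (-48) * ψ1^2 * ψ2 * X1^14 * I + (384) * ψ1^2 * ψ2 * X1^13 * I + (-1344) * ψ1^2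 * ψ2 * X1^12 * I + (2592) * ψ1^2 * ψ2 * X1^11 * I + (-2640) * ψ1^2 * ψ2 * X1^10 * I + (384) * ψ1^2 * ψ2 * X1^9 * I + (2640) * ψ1^2 * ψ2 * X1^8 * I + (-3360) * ψ1^2 * ψ2 * X1^7 * I + (1248) * ψ1^2 * ψ2 * X1^6 * I + (960) * ψ1^2 * ψ2 * X1^5 * I + (-1296) * ψ1^2 * ψ2 * X1^4 * I + (576) * ψ1^2 * ψ2 * X1^3 * I + (-96) * ψ1^2 * ψ2 * X1^2 * I + (-24) * ψ1^2 * X1^14 + (216) * ψ1^2 * X1^13 + (-852) * ψ1^2 * X1^12 + (1880) * ψ1^2 * X1^11 + (-2388) * ψ1^2 * X1^10 + (1392) * ψ1^2 * X1^9 + (500) * ψ1^2 * X1^8 + (-1464) * ψ1^2 * X1^7 + (900) * ψ1^2 * X1^6 + (8) * ψ1^2 * X1^5 + (-288) * ψ1^2 * X1^4 + (144) * ψ1^2 * X1^3 + (-24) * ψ1^2 * X1^2 + (-16) * ψ1 * ψ2^2 * X1^14 * I + (144) * ψ1 * ψ2^2 * X1^13 * I + (-576) * ψ1 * ψ2^2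 * X1^12 * I + (1312) * ψ1 * ψ2^2 * X1^11 * I + (-1728) * ψ1 * ψ2^2 * X1^10 * I + (864) * ψ1 * ψ2^2 * X1^9 * I + (1344) * ψ1 * ψ2^2 * X1^8 * I + (-3456) * ψ1 * ψ2^2 * X1^7 * I + (3888) * ψ1 * ψ2^2 * X1^6 * I + (-2672) * ψ1 * ψ2^2 * X1^5 * I + (1152) * ψ1 * ψ2^2 * X1^4 * I + (-288) * ψ1 * ψ2^2 * X1^3 * I + (32) * ψ1 * ψ2^2 * X1^2 * I + (-24) * ψ1 * ψ2 * X1^14 + (240) * ψ1 * ψ2 * X1^13 + (-1080) * ψ1 * ψ2 * X1^12 + (2848) * ψ1 * ψ2 * X1^11 + (-4752) * ψ1 * ψ2 * X1^10 + (4896) * ψ1 * ψ2 * X1^9 + (-2352) * ψ1 * ψ2 * X1^8 + (-1152) * ψ1 * ψ2 * X1^7 + (2952) * ψ1 * ψ2 * X1^6 + (-2448) * ψ1 * ψ2 * X1^5 + (1128) * ψ1 * ψ2 * X1^4 + (-288) * ψ1 * ψ2 * X1^3 + (32) * ψ1 * ψ2 * X1^2 + (8) * ψ1 * X1^14 * I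 + (-84) * ψ1 * X1^13 * I + (396) * ψ1 * X1^12 * I + (-1096) * ψ1 * X1^11 * I + (1944) * ψ1 * X1^10 * I + (-2232) * ψ1 * X1^9 * I + (1512) * ψ1 * X1^8 * I + (-288) * ψ1 * X1^7 * I + (-504) * ψ1 * X1^6 * I + (556) * ψ1 * X1^5 * I + (-276) * ψ1 * X1^4 * I + (72) * ψ1 * X1^3 * I + (-8) * ψ1 * X1^2 * I + (-4) * ψ2^2 * X1^14 + (48) * ψ2^2 * X1^13 + (-264) * ψ2^2 * X1^12 + (880) * ψ2^2 * X1^11 + (-1980) * ψ2^2 * X1^10 + (3168) * ψ2^2 * X1^9 + (-3696) * ψ2^2 * X1^8 + (3168) * ψ2^2 * X1^7 + (-1980) * ψ2^2 * X1^6 + (880) * ψ2^2 * X1^5 + (-264) * ψ2^2 * X1^4 + (48) * ψ2^2 * X1^3 + (-4) * ψ2^2 * X1^2 + (4) * ψ2 * X1^14 * I + (-48) * ψ2 * X1^13 * I + (264) * ψ2 * X1^12 * I + (-880) * ψ2 * X1^11 * I + (1980) * ψ2 * X1^10 * I + (-3168) * ψ2 * X1^9 * I + (3696) * ψ2 * X1^8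 * I + (-3168) * ψ2 * X1^7 * I + (1980) * ψ2 * X1^6 * I + (-880) * ψ2 * X1^5 * I + (264) * ψ2 * X1^4 * I + (-48) * ψ2 * X1^3 * I + (4) * ψ2 * X1^2 * I + (1) * X1^14 + (-12) * X1^13 + (66) * X1^12 + (-220) * X1^11 + (495) * X1^10 + (-792) * X1^9 + (924) * X1^8 + (-792) * X1^7 + (495) * X1^6 + (-220) * X1^5 + (66) * X1^4 + (-12) * X1^3 + (1) * X1^2) * hP1 - (-1/4 : ℂ) * ((16) * ψ1^3 * ψ2 * X1^6 * X2 + (-16) * ψ1^3 * ψ2 * X1^4 + (-16) * ψ1^3 * ψ2 * X1^3 * X2 + (16) * ψ1^3 * ψ2 * X1 + (-8) * ψ1^3 * X1^10 * I + (8) * ψ1^3 * X1^9 * X2 * I + (24) * ψ1^3 * X1^9 * I + (-24) * ψ1^3 * X1^8 * X2 * I + (-24) * ψ1^3 * X1^8 * I + (24) * ψ1^3 * X1^7 * X2 * I + (8) * ψ1^3 * X1^6 * X2 * I + (24) * ψ1^3 * X1^6 * I + (-24) * ψ1^3 * X1^5 * X2 * I + (-24) * ψ1^3 * X1^5 * I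 + (-8) * ψ1^3 * X1^4 * I + (8) * ψ1^3 * X1^3 * X2 * I + (24) * ψ1^3 * X1^3 * I + (-8) * ψ1^3 * X1 * I + (-8) * ψ1^2 * ψ2 * X1^10 * I + (8) * ψ1^2 * ψ2 * X1^9 * X2 * I + (24) * ψ1^2 * ψ2 * X1^9 * I + (-24) * ψ1^2 * ψ2 * X1^8 * X2 * I + (-24) * ψ1^2 * ψ2 * X1^8 * I + (24) * ψ1^2 * ψ2 * X1^7 * X2 * I + (8) * ψ1^2 * ψ2 * X1^6 * X2 * I + (24) * ψ1^2 * ψ2 * X1^6 * I + (-48) * ψ1^2 * ψ2 * X1^5 * X2 * I + (-24) * ψ1^2 * ψ2 * X1^5 * I + (48) * ψ1^2 * ψ2 * X1^4 * X2 * I + (-16) * ψ1^2 * ψ2 * X1^4 * I + (-16) * ψ1^2 * ψ2 * X1^3 * X2 * I + (72) * ψ1^2 * ψ2 * X1^3 * I + (-72) * ψ1^2 * ψ2 * X1^2 * I + (24) * ψ1^2 * ψ2 * X1 * I + (-12) * ψ1^2 * X1^10 + (8) * ψ1^2 * X1^9 * X2 + (60) * ψ1^2 * X1^9 + (-36) *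 ψ1^2 * X1^8 * X2 + (-120) * ψ1^2 * X1^8 + (60) * ψ1^2 * X1^7 * X2 + (104) * ψ1^2 * X1^7 + (-36) * ψ1^2 * X1^6 * X2 + (12) * ψ1^2 * X1^6 + (-12) * ψ1^2 * X1^5 * X2 + (-108) * ψ1^2 * X1^5 + (24) * ψ1^2 * X1^4 * X2 + (76) * ψ1^2 * X1^4 + (-8) * ψ1^2 * X1^3 * X2 + (12) * ψ1^2 * X1^3 + (-36) * ψ1^2 * X1^2 + (12) * ψ1^2 * X1 + (-8) * ψ1 * ψ2 * X1^10 + (4) * ψ1 * ψ2 * X1^9 * X2 + (48) * ψ1 * ψ2 * X1^9 + (-24) * ψ1 * ψ2 * X1^8 * X2 + (-120) * ψ1 * ψ2 * X1^8 + (60) * ψ1 * ψ2 * X1^7 * X2 + (148) * ψ1 * ψ2 * X1^7 + (-80) * ψ1 * ψ2 * X1^6 * X2 + (-48) * ψ1 * ψ2 * X1^6 + (60) * ψ1 * ψ2 * X1^5 * X2 + (-132) * ψ1 * ψ2 * X1^5 + (-24) * ψ1 * ψ2 * X1^4 * X2 + (232) * ψ1 * ψ2 * X1^4 + (4) * ψ1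 * ψ2 * X1^3 * X2 + (-180) * ψ1 * ψ2 * X1^3 + (72) * ψ1 * ψ2 * X1^2 + (-12) * ψ1 * ψ2 * X1 + (6) * ψ1 * X1^10 * I + (-2) * ψ1 * X1^9 * X2 * I + (-42) * ψ1 * X1^9 * I + (12) * ψ1 * X1^8 * X2 * I + (126) * ψ1 * X1^8 * I + (-30) * ψ1 * X1^7 * X2 * I + (-204) * ψ1 * X1^7 * I + (40) * ψ1 * X1^6 * X2 * I + (174) * ψ1 * X1^6 * I + (-30) * ψ1 * X1^5 * X2 * I + (-36) * ψ1 * X1^5 * I + (12) * ψ1 * X1^4 * X2 * I + (-78) * ψ1 * X1^4 * I + (-2) * ψ1 * X1^3 * X2 * I + (84) * ψ1 * X1^3 * I + (-36) * ψ1 * X1^2 * I + (6) * ψ1 * X1 * I + (2) * ψ2 * X1^10 * I + (-18) * ψ2 * X1^9 * I + (72) * ψ2 * X1^8 * I + (-168) * ψ2 * X1^7 * I + (252) * ψ2 * X1^6 * I + (-252) * ψ2 * X1^5 * I + (168) * ψ2 * X1^4 * I + (-72) * ψ2 * X1^3 * I + (18) * ψ2 * X1^2 * I + (-2) * ψ2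 * X1 * I + (1) * X1^10 + (-9) * X1^9 + (36) * X1^8 + (-84) * X1^7 + (126) * X1^6 + (-126) * X1^5 + (84) * X1^4 + (-36) * X1^3 + (9) * X1^2 + (-1) * X1) * h2 - ((-16) * ψ1^5 * ψ2 * X1^15 + (48) * ψ1^5 * ψ2 * X1^14 + (16) * ψ1^5 * ψ2 * X1^13 * X2^2 + (-48) * ψ1^5 * ψ2 * X1^13 + (-48) * ψ1^5 * ψ2 * X1^12 * X2^2 + (48) * ψ1^5 * ψ2 * X1^12 + (48) * ψ1^5 * ψ2 * X1^11 * X2^2 + (-48) * ψ1^5 * ψ2 * X1^11 * X2 + (-96) * ψ1^5 * ψ2 * X1^11 + (96) * ψ1^5 * ψ2 * X1^10 * X2 + (96) * ψ1^5 * ψ2 * X1^10 + (-48) * ψ1^5 * ψ2 * X1^9 * X2 + (-16) * ψ1^5 * ψ2 * X1^9 + (-48) * ψ1^5 * ψ2 * X1^8 * X2^2 + (16) * ψ1^5 * ψ2 * X1^8 * X2 + (-48) * ψ1^5 * ψ2 * X1^7 * X2 + (-48) * ψ1^5 * ψ2 * X1^7 + (48) * ψ1^5 * ψ2 * X1^6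 * X2^2 + (48) * ψ1^5 * ψ2 * X1^6 * X2 + (16) * ψ1^5 * ψ2 * X1^5 * X2 + (48) * ψ1^5 * ψ2 * X1^5 + (-16) * ψ1^5 * ψ2 * X1^4 * X2^2 + (-48) * ψ1^5 * ψ2 * X1^4 * X2 + (-16) * ψ1^5 * ψ2 * X1^3 + (16) * ψ1^5 * ψ2 * X1^2 * X2 + (-16) * ψ1^4 * ψ2^2 * X1^15 + (48) * ψ1^4 * ψ2^2 * X1^14 + (16) * ψ1^4 * ψ2^2 * X1^13 * X2^2 + (-48) * ψ1^4 * ψ2^2 * X1^13 + (-48) * ψ1^4 * ψ2^2 * X1^12 * X2^2 + (48) * ψ1^4 * ψ2^2 * X1^12 + (48) * ψ1^4 * ψ2^2 * X1^11 * X2^2 + (-48) * ψ1^4 * ψ2^2 * X1^11 * X2 + (-96) * ψ1^4 * ψ2^2 * X1^11 + (144) * ψ1^4 * ψ2^2 * X1^10 * X2 + (96) * ψ1^4 * ψ2^2 * X1^10 + (-48) * ψ1^4 * ψ2^2 * X1^9 * X2^2 + (-144) * ψ1^4 * ψ2^2 * X1^9 * X2 + (-32) * ψ1^4 * ψ2^2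 * X1^9 + (48) * ψ1^4 * ψ2^2 * X1^8 * X2^2 + (80) * ψ1^4 * ψ2^2 * X1^8 * X2 + (-48) * ψ1^4 * ψ2^2 * X1^7 * X2^2 + (-96) * ψ1^4 * ψ2^2 * X1^7 * X2 + (96) * ψ1^4 * ψ2^2 * X1^6 * X2^2 + (96) * ψ1^4 * ψ2^2 * X1^6 * X2 + (-16) * ψ1^4 * ψ2^2 * X1^6 + (-96) * ψ1^4 * ψ2^2 * X1^5 * X2^2 + (-16) * ψ1^4 * ψ2^2 * X1^5 * X2 + (48) * ψ1^4 * ψ2^2 * X1^5 + (32) * ψ1^4 * ψ2^2 * X1^4 * X2^2 + (-48) * ψ1^4 * ψ2^2 * X1^4 * X2 + (-48) * ψ1^4 * ψ2^2 * X1^4 + (48) * ψ1^4 * ψ2^2 * X1^3 * X2 + (16) * ψ1^4 * ψ2^2 * X1^3 + (-16) * ψ1^4 * ψ2^2 * X1^2 * X2 + (-8) * ψ1^4 * X1^17 * X2 + (8) * ψ1^4 * X1^16 * X2^2 + (60) * ψ1^4 * X1^16 * X2 + (-60) * ψ1^4 * X1^15 * X2^2 + (-192) * ψ1^4 * X1^15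 * X2 + (24) * ψ1^4 * X1^15 + (192) * ψ1^4 * X1^14 * X2^2 + (296) * ψ1^4 * X1^14 * X2 + (-156) * ψ1^4 * X1^14 + (-316) * ψ1^4 * X1^13 * X2^2 + (-84) * ψ1^4 * X1^13 * X2 + (444) * ψ1^4 * X1^13 + (216) * ψ1^4 * X1^12 * X2^2 + (-480) * ψ1^4 * X1^12 * X2 + (-676) * ψ1^4 * X1^12 + (120) * ψ1^4 * X1^11 * X2^2 + (812) * ψ1^4 * X1^11 * X2 + (468) * ψ1^4 * X1^11 + (-324) * ψ1^4 * X1^10 * X2^2 + (-396) * ψ1^4 * X1^10 * X2 + (132) * ψ1^4 * X1^10 + (156) * ψ1^4 * X1^9 * X2^2 + (-324) * ψ1^4 * X1^9 * X2 + (-460) * ψ1^4 * X1^9 + (96) * ψ1^4 * X1^8 * X2^2 + (528) * ψ1^4 * X1^8 * X2 + (168) * ψ1^4 * X1^8 + (-116) * ψ1^4 * X1^7 * X2^2 + (-180) * ψ1^4 * X1^7 * X2 + (216) * ψ1^4 * X1^7 + (12) * ψ1^4 * X1^6 * X2^2 + (-132) * ψ1^4 * X1^6 * X2 + (-208) * ψ1^4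 * X1^6 + (24) * ψ1^4 * X1^5 * X2^2 + (128) * ψ1^4 * X1^5 * X2 + (24) * ψ1^4 * X1^5 + (-8) * ψ1^4 * X1^4 * X2^2 + (-12) * ψ1^4 * X1^4 * X2 + (36) * ψ1^4 * X1^4 + (-24) * ψ1^4 * X1^3 * X2 + (-12) * ψ1^4 * X1^3 + (8) * ψ1^4 * X1^2 * X2 + (-12) * ψ1^3 * ψ2 * X1^17 * X2 + (12) * ψ1^3 * ψ2 * X1^16 * X2^2 + (96) * ψ1^3 * ψ2 * X1^16 * X2 + (-96) * ψ1^3 * ψ2 * X1^15 * X2^2 + (-336) * ψ1^3 * ψ2 * X1^15 * X2 + (28) * ψ1^3 * ψ2 * X1^15 + (336) * ψ1^3 * ψ2 * X1^14 * X2^2 + (604) * ψ1^3 * ψ2 * X1^14 * X2 + (-216) * ψ1^3 * ψ2 * X1^14 + (-648) * ψ1^3 * ψ2 * X1^13 * X2^2 + (-324) * ψ1^3 * ψ2 * X1^13 * X2 + (744) * ψ1^3 * ψ2 * X1^13 + (660) * ψ1^3 * ψ2 * X1^12 * X2^2 + (-1008) * ψ1^3 * ψ2 * X1^12 * X2 +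 (-1424) * ψ1^3 * ψ2 * X1^12 + (-96) * ψ1^3 * ψ2 * X1^11 * X2^2 + (2668) * ψ1^3 * ψ2 * X1^11 * X2 + (1452) * ψ1^3 * ψ2 * X1^11 + (-660) * ψ1^3 * ψ2 * X1^10 * X2^2 + (-2964) * ψ1^3 * ψ2 * X1^10 * X2 + (-288) * ψ1^3 * ψ2 * X1^10 + (840) * ψ1^3 * ψ2 * X1^9 * X2^2 + (1464) * ψ1^3 * ψ2 * X1^9 * X2 + (-1220) * ψ1^3 * ψ2 * X1^9 + (-312) * ψ1^3 * ψ2 * X1^8 * X2^2 + (236) * ψ1^3 * ψ2 * X1^8 * X2 + (1632) * ψ1^3 * ψ2 * X1^8 + (-240) * ψ1^3 * ψ2 * X1^7 * X2^2 + (-732) * ψ1^3 * ψ2 * X1^7 * X2 + (-816) * ψ1^3 * ψ2 * X1^7 + (324) * ψ1^3 * ψ2 * X1^6 * X2^2 + (336) * ψ1^3 * ψ2 * X1^6 * X2 + (-72) * ψ1^3 * ψ2 * X1^6 + (-144) * ψ1^3 * ψ2 * X1^5 * X2^2 + (40) * ψ1^3 * ψ2 * X1^5 * X2 + (300) * ψ1^3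 * ψ2 * X1^5 + (24) * ψ1^3 * ψ2 * X1^4 * X2^2 + (-108) * ψ1^3 * ψ2 * X1^4 * X2 + (-144) * ψ1^3 * ψ2 * X1^4 + (48) * ψ1^3 * ψ2 * X1^3 * X2 + (24) * ψ1^3 * ψ2 * X1^3 + (-8) * ψ1^3 * ψ2 * X1^2 * X2 + (-6) * ψ1^3 * X1^15 * I + (42) * ψ1^3 * X1^14 * I + (-120) * ψ1^3 * X1^13 * I + (168) * ψ1^3 * X1^12 * I + (-84) * ψ1^3 * X1^11 * I + (-84) * ψ1^3 * X1^10 * I + (168) * ψ1^3 * X1^9 * I + (-120) * ψ1^3 * X1^8 * I + (42) * ψ1^3 * X1^7 * I + (-6) * ψ1^3 * X1^6 * I + (-4) * ψ1^2 * ψ2^2 * X1^17 * X2 + (4) * ψ1^2 * ψ2^2 * X1^16 * X2^2 + (36) * ψ1^2 * ψ2^2 * X1^16 * X2 + (-36) * ψ1^2 * ψ2^2 * X1^15 * X2^2 + (-144) * ψ1^2 * ψ2^2 * X1^15 * X2 + (8) * ψ1^2 * ψ2^2 * X1^15 + (144) * ψ1^2 * ψ2^2 * X1^14 * X2^2 +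 (312) * ψ1^2 * ψ2^2 * X1^14 * X2 + (-72) * ψ1^2 * ψ2^2 * X1^14 + (-328) * ψ1^2 * ψ2^2 * X1^13 * X2^2 + (-288) * ψ1^2 * ψ2^2 * X1^13 * X2 + (312) * ψ1^2 * ψ2^2 * X1^13 + (432) * ψ1^2 * ψ2^2 * X1^12 * X2^2 + (-360) * ψ1^2 * ψ2^2 * X1^12 * X2 + (-780) * ψ1^2 * ψ2^2 * X1^12 + (-216) * ψ1^2 * ψ2^2 * X1^11 * X2^2 + (1680) * ψ1^2 * ψ2^2 * X1^11 * X2 + (1140) * ψ1^2 * ψ2^2 * X1^11 + (-336) * ψ1^2 * ψ2^2 * X1^10 * X2^2 + (-2880) * ψ1^2 * ψ2^2 * X1^10 * X2 + (-816) * ψ1^2 * ψ2^2 * X1^10 + (864) * ψ1^2 * ψ2^2 * X1^9 * X2^2 + (2988) * ψ1^2 * ψ2^2 * X1^9 * X2 + (-216) * ψ1^2 * ψ2^2 * X1^9 + (-972) * ψ1^2 * ψ2^2 * X1^8 * X2^2 + (-2012) * ψ1^2 * ψ2^2 * X1^8 * X2 + (1200) * ψ1^2 * ψ2^2 * X1^8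 + (668) * ψ1^2 * ψ2^2 * X1^7 * X2^2 + (864) * ψ1^2 * ψ2^2 * X1^7 * X2 + (-1440) * ψ1^2 * ψ2^2 * X1^7 + (-288) * ψ1^2 * ψ2^2 * X1^6 * X2^2 + (-216) * ψ1^2 * ψ2^2 * X1^6 * X2 + (1000) * ψ1^2 * ψ2^2 * X1^6 + (72) * ψ1^2 * ψ2^2 * X1^5 * X2^2 + (24) * ψ1^2 * ψ2^2 * X1^5 * X2 + (-432) * ψ1^2 * ψ2^2 * X1^5 + (-8) * ψ1^2 * ψ2^2 * X1^4 * X2^2 + (108) * ψ1^2 * ψ2^2 * X1^4 + (-12) * ψ1^2 * ψ2^2 * X1^3 + (-2) * ψ1^2 * X1^17 * X2 + (-2) * ψ1^2 * X1^16 * X2^2 + (27) * ψ1^2 * X1^16 * X2 + (21) * ψ1^2 * X1^15 * X2^2 + (-162) * ψ1^2 * X1^15 * X2 + (1) * ψ1^2 * X1^15 * I^2 + (-2) * ψ1^2 * X1^15 + (-99) * ψ1^2 * X1^14 * X2^2 + (568) * ψ1^2 * X1^14 * X2 + (-9) * ψ1^2 * X1^14 * I^2 + (21) * ψ1^2 *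 X1^14 + (274) * ψ1^2 * X1^13 * X2^2 + (-1278) * ψ1^2 * X1^13 * X2 + (30) * ψ1^2 * X1^13 * I^2 + (-93) * ψ1^2 * X1^13 + (-486) * ψ1^2 * X1^12 * X2^2 + (1881) * ψ1^2 * X1^12 * X2 + (-54) * ψ1^2 * X1^12 * I^2 + (245) * ψ1^2 * X1^12 + (558) * ψ1^2 * X1^11 * X2^2 + (-1694) * ψ1^2 * X1^11 * X2 + (66) * ψ1^2 * X1^11 * I^2 + (-435) * ψ1^2 * X1^11 + (-378) * ψ1^2 * X1^10 * X2^2 + (594) * ψ1^2 * X1^10 * X2 + (-66) * ψ1^2 * X1^10 * I^2 + (534) * ψ1^2 * X1^10 + (72) * ψ1^2 * X1^9 * X2^2 + (594) * ψ1^2 * X1^9 * X2 + (54) * ψ1^2 * X1^9 * I^2 + (-432) * ψ1^2 * X1^9 + (126) * ψ1^2 * X1^8 * X2^2 + (-979) * ψ1^2 * X1^8 * X2 + (-30) * ψ1^2 * X1^8 * I^2 + (192) * ψ1^2 * X1^8 + (-139) * ψ1^2 * X1^7 * X2^2 + (594) * ψ1^2 * X1^7 * X2 + (9) * ψ1^2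 * X1^7 * I^2 + (69) * ψ1^2 * X1^6 * X2^2 + (-108) * ψ1^2 * X1^6 * X2 + (-1) * ψ1^2 * X1^6 * I^2 + (-55) * ψ1^2 * X1^6 + (-18) * ψ1^2 * X1^5 * X2^2 + (-82) * ψ1^2 * X1^5 * X2 + (33) * ψ1^2 * X1^5 + (2) * ψ1^2 * X1^4 * X2^2 + (63) * ψ1^2 * X1^4 * X2 + (-9) * ψ1^2 * X1^4 + (-18) * ψ1^2 * X1^3 * X2 + (1) * ψ1^2 * X1^3 + (2) * ψ1^2 * X1^2 * X2 + (-3) * ψ1 * ψ2 * X1^17 * X2 + (-1) * ψ1 * ψ2 * X1^16 * X2^2 + (42) * ψ1 * ψ2 * X1^16 * X2 + (12) * ψ1 * ψ2 * X1^15 * X2^2 + (-270) * ψ1 * ψ2 * X1^15 * X2 + (-1) * ψ1 * ψ2 * X1^15 + (-66) * ψ1 * ψ2 * X1^14 * X2^2 + (1053) * ψ1 * ψ2 * X1^14 * X2 + (12) * ψ1 * ψ2 * X1^14 + (220) * ψ1 * ψ2 * X1^13 * X2^2 + (-2769) * ψ1 * ψ2 * X1^13 * X2 + (-66) * ψ1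 * ψ2 * X1^13 + (-495) * ψ1 * ψ2 * X1^12 * X2^2 + (5148) * ψ1 * ψ2 * X1^12 * X2 + (220) * ψ1 * ψ2 * X1^12 + (792) * ψ1 * ψ2 * X1^11 * X2^2 + (-6864) * ψ1 * ψ2 * X1^11 * X2 + (-495) * ψ1 * ψ2 * X1^11 + (-924) * ψ1 * ψ2 * X1^10 * X2^2 + (6435) * ψ1 * ψ2 * X1^10 * X2 + (792) * ψ1 * ψ2 * X1^10 + (792) * ψ1 * ψ2 * X1^9 * X2^2 + (-3861) * ψ1 * ψ2 * X1^9 * X2 + (-924) * ψ1 * ψ2 * X1^9 + (-495) * ψ1 * ψ2 * X1^8 * X2^2 + (858) * ψ1 * ψ2 * X1^8 * X2 + (792) * ψ1 * ψ2 * X1^8 + (220) * ψ1 * ψ2 * X1^7 * X2^2 + (858) * ψ1 * ψ2 * X1^7 * X2 + (-495) * ψ1 * ψ2 * X1^7 + (-66) * ψ1 * ψ2 * X1^6 * X2^2 + (-1053) * ψ1 * ψ2 * X1^6 * X2 + (220) * ψ1 * ψ2 * X1^6 + (12) * ψ1 * ψ2 * X1^5 * X2^2 + (585) * ψ1 * ψ2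 * X1^5 * X2 + (-66) * ψ1 * ψ2 * X1^5 + (-1) * ψ1 * ψ2 * X1^4 * X2^2 + (-192) * ψ1 * ψ2 * X1^4 * X2 + (12) * ψ1 * ψ2 * X1^4 + (36) * ψ1 * ψ2 * X1^3 * X2 + (-1) * ψ1 * ψ2 * X1^3 + (-3) * ψ1 * ψ2 * X1^2 * X2 + (-1) * ψ2^2 * X1^17 * X2 + (15) * ψ2^2 * X1^16 * X2 + (-105) * ψ2^2 * X1^15 * X2 + (455) * ψ2^2 * X1^14 * X2 + (-1365) * ψ2^2 * X1^13 * X2 + (3003) * ψ2^2 * X1^12 * X2 + (-5005) * ψ2^2 * X1^11 * X2 + (6435) * ψ2^2 * X1^10 * X2 + (-6435) * ψ2^2 * X1^9 * X2 + (5005) * ψ2^2 * X1^8 * X2 + (-3003) * ψ2^2 * X1^7 * X2 + (1365) * ψ2^2 * X1^6 * X2 + (-455) * ψ2^2 * X1^5 * X2 + (105) * ψ2^2 * X1^4 * X2 + (-15) * ψ2^2 * X1^3 * X2 + (1) * ψ2^2 * X1^2 * X2) * Complex.I_sq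
  have hne : ψ1 ^ 2 * X1 ^ 6 * (X1 - 1) ^ 5 ≠ 0 :=
    mul_ne_zero (mul_ne_zero (pow_ne_zero _ hψ1) (pow_ne_zero _ hX1ne0)) (pow_ne_zero _ hX1)
  rcases mul_eq_zero.mp h3 with h | h
  · exact absurd h hne
  · exact h
end

section
/- Let ψ_1, ψ_2, ψ_3 be complex numbers with ψ_1 + ψ_2 + ψ_3 = 0, and define R_1(X) = a_4X⁴ + a_3X³ + a_2X² + a_1X + a_0 with a_4 = −(2ψ_1−i)²(2ψ_2+i)(2ψ_3+i), a_3 = −4(ψ_1+i)(2ψ_1−i)(2ψ_2+i)(2ψ_3+i), a_2 = −6(8ψ_1²ψ_2ψ_3 + 2ψ_1² + 2ψ_2² + 2ψ_3² + 1), a_1 = −4(ψ_1−i)(2ψ_1+i)(2ψ_2−i)(2ψ_3−i), a_0 = −(2ψ_1+i)²(2ψ_2−i)(2ψ_3−i), and define the Cayley-transformed quartic R̃_1(c) = b_4c⁴ + b_3c³ + b_2c² + b_1c + b_0 with b_4 = −9ψ_1²ψ_2ψ_3, b_3 = −4ψ_1(2ψ_2+ψ_3)(ψ_2+2ψ_3),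 b_2 = 6ψ_1²(ψ_2ψ_3−2), b_1 = 6ψ_1(2ψ_2ψ_3−1), b_0 = −(ψ_1²ψ_2ψ_3 − 4ψ_2ψ_3 + 1). Then for every c ∈ ℂ with c ≠ i, setting X = (c+i)/(c−i), one has (c−i)⁴·R_1(X) = 16·R̃_1(c). -/
set_option maxHeartbeats 1000000 in
open Complex in
/-- With `ψ₁ + ψ₂ + ψ₃ = 0`, the Cayley transformation
`X = (c+i)/(c−i)` relates the quartic `R₁` to the transformed quartic `R̃₁`
via `(c−i)⁴·R₁(X) = 16·R̃₁(c)`. -/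
theorem cayley_transform_quartic
    (ψ1 ψ2 ψ3 : ℂ) (hsum : ψ1 + ψ2 + ψ3 = 0)
    (a4 a3 a2 a1 a0 : ℂ)
    (ha4 : a4 = -((2 * ψ1 - I) ^ 2 * (2 * ψ2 + I) * (2 * ψ3 + I)))
    (ha3 : a3 = -(4 * (ψ1 + I) * (2 * ψ1 - I) * (2 * ψ2 + I) * (2 * ψ3 + I)))
    (ha2 : a2 = -(6 * (8 * ψ1 ^ 2 * ψ2 * ψ3 + 2 * ψ1 ^ 2 + 2 * ψ2 ^ 2 + 2 * ψ3 ^ 2 + 1)))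
    (ha1 : a1 = -(4 * (ψ1 - I) * (2 * ψ1 + I) * (2 * ψ2 - I) * (2 * ψ3 - I)))
    (ha0 : a0 = -((2 * ψ1 + I) ^ 2 * (2 * ψ2 - I) * (2 * ψ3 - I)))
    (b4 b3 b2 b1 b0 : ℂ)
    (hb4 : b4 = -(9 * ψ1 ^ 2 * ψ2 * ψ3))
    (hb3 : b3 = -(4 * ψ1 * (2 * ψ2 + ψ3) * (ψ2 + 2 * ψ3)))
    (hb2 : b2 = 6 * ψ1 ^ 2 * (ψ2 * ψ3 - 2))
    (hb1 : b1 = 6 * ψ1 * (2 * ψ2 * ψ3 - 1))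
    (hb0 : b0 = -(ψ1 ^ 2 * ψ2 * ψ3 - 4 * ψ2 * ψ3 + 1)) :
    ∀ c : ℂ, c ≠ I →
      (c - I) ^ 4 * (a4 * ((c + I) / (c - I)) ^ 4 + a3 * ((c + I) / (c - I)) ^ 3
          + a2 * ((c + I) / (c - I)) ^ 2 + a1 * ((c + I) / (c - I)) + a0)
        = 16 * (b4 * c ^ 4 + b3 * c ^ 3 + b2 * c ^ 2 + b1 * c + b0) := by
  intro c hc
  have hne : c - I ≠ 0 := sub_ne_zero.mpr hc
  have h1 : ψ1 = -ψ2 - ψ3 := by linear_combination hsum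
  subst h1 ha4 ha3 ha2 ha1 ha0 hb4 hb3 hb2 hb1 hb0
  have hXd : (c + I) / (c - I) * (c - I) = c + I := div_mul_cancel₀ _ hne
  set X := (c + I) / (c - I) with hX
  calc (c - I) ^ 4 *
      (-((2 * (-ψ2 - ψ3) - I) ^ 2 * (2 * ψ2 + I) * (2 * ψ3 + I)) * X ^ 4
        + -(4 * (-ψ2 - ψ3 + I) * (2 * (-ψ2 - ψ3) - I) * (2 * ψ2 + I) * (2 * ψ3 + I)) * X ^ 3
        + -(6 * (8 * (-ψ2 - ψ3) ^ 2 * ψ2 * ψ3 + 2 * (-ψ2 - ψ3) ^ 2 + 2 * ψ2 ^ 2 + 2 * ψ3 ^ 2 + 1)) * X ^ 2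
        + -(4 * (-ψ2 - ψ3 - I) * (2 * (-ψ2 - ψ3) + I) * (2 * ψ2 - I) * (2 * ψ3 - I)) * X
        + -((2 * (-ψ2 - ψ3) + I) ^ 2 * (2 * ψ2 - I) * (2 * ψ3 - I)))
      = -((2 * (-ψ2 - ψ3) - I) ^ 2 * (2 * ψ2 + I) * (2 * ψ3 + I)) * (X * (c - I)) ^ 4
        + -(4 * (-ψ2 - ψ3 + I) * (2 * (-ψ2 - ψ3) - I) * (2 * ψ2 + I) * (2 * ψ3 + I)) * (X * (c - I)) ^ 3 * (c - I)
        + -(6 * (8 * (-ψ2 - ψ3) ^ 2 * ψ2 * ψ3 + 2 * (-ψ2 - ψ3) ^ 2 + 2 * ψ2 ^ 2 + 2 * ψ3 ^ 2 + 1)) * (X * (c - I)) ^ 2 * (c - I) ^ 2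
        + -(4 * (-ψ2 - ψ3 - I) * (2 * (-ψ2 - ψ3) + I) * (2 * ψ2 - I) * (2 * ψ3 - I)) * (X * (c - I)) * (c - I) ^ 3
        + -((2 * (-ψ2 - ψ3) + I) ^ 2 * (2 * ψ2 - I) * (2 * ψ3 - I)) * (c - I) ^ 4 := by ring
    _ = -((2 * (-ψ2 - ψ3) - I) ^ 2 * (2 * ψ2 + I) * (2 * ψ3 + I)) * (c + I) ^ 4
        + -(4 * (-ψ2 - ψ3 + I) * (2 * (-ψ2 - ψ3) - I) * (2 * ψ2 + I) * (2 * ψ3 + I)) * (c + I) ^ 3 * (c - I)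
        + -(6 * (8 * (-ψ2 - ψ3) ^ 2 * ψ2 * ψ3 + 2 * (-ψ2 - ψ3) ^ 2 + 2 * ψ2 ^ 2 + 2 * ψ3 ^ 2 + 1)) * (c + I) ^ 2 * (c - I) ^ 2
        + -(4 * (-ψ2 - ψ3 - I) * (2 * (-ψ2 - ψ3) + I) * (2 * ψ2 - I) * (2 * ψ3 - I)) * (c + I) * (c - I) ^ 3
        + -((2 * (-ψ2 - ψ3) + I) ^ 2 * (2 * ψ2 - I) * (2 * ψ3 - I)) * (c - I) ^ 4 := by rw [hXd]
    _ = 16 * (-(9 * (-ψ2 - ψ3) ^ 2 * ψ2 * ψ3) * c ^ 4 + -(4 * (-ψ2 - ψ3) * (2 * ψ2 + ψ3) * (ψ2 + 2 * ψ3)) * c ^ 3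
        + 6 * (-ψ2 - ψ3) ^ 2 * (ψ2 * ψ3 - 2) * c ^ 2 + 6 * (-ψ2 - ψ3) * (2 * ψ2 * ψ3 - 1) * c
        + -((-ψ2 - ψ3) ^ 2 * ψ2 * ψ3 - 4 * ψ2 * ψ3 + 1)) := by
        linear_combination ((16:ℂ) + (-16:ℂ)*I^2 + (10:ℂ)*I^4 + (-10:ℂ)*I^6 + (-24:ℂ)*ψ3^2*I^4 + (-64:ℂ)*ψ2^1*ψ3^1 + (64:ℂ)*ψ2^1*ψ3^1*I^2 + (-88:ℂ)*ψ2^1*ψ3^1*I^4 + (16:ℂ)*ψ2^1*ψ3^3 + (-16:ℂ)*ψ2^1*ψ3^3*I^2 + (-24:ℂ)*ψ2^2*I^4 + (32:ℂ)*ψ2^2*ψ3^2 + (-32:ℂ)*ψ2^2*ψ3^2*I^2 + (16:ℂ)*ψ2^3*ψ3^1 + (-16:ℂ)*ψ2^3*ψ3^1*I^2 + (-96:ℂ)*c^1*ψ3^1 + (96:ℂ)*c^1*ψ3^1*I^2 + (-96:ℂ)*c^1*ψ3^1*I^4 + (-96:ℂ)*c^1*ψ2^1 + (96:ℂ)*c^1*ψ2^1*I^2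 + (-96:ℂ)*c^1*ψ2^1*I^4 + (192:ℂ)*c^1*ψ2^1*ψ3^2 + (-192:ℂ)*c^1*ψ2^1*ψ3^2*I^2 + (192:ℂ)*c^1*ψ2^2*ψ3^1 + (-192:ℂ)*c^1*ψ2^2*ψ3^1*I^2 + (12:ℂ)*c^2*I^2 + (-12:ℂ)*c^2*I^4 + (192:ℂ)*c^2*ψ3^2 + (-144:ℂ)*c^2*ψ3^2*I^2 + (384:ℂ)*c^2*ψ2^1*ψ3^1 + (-336:ℂ)*c^2*ψ2^1*ψ3^1*I^2 + (-96:ℂ)*c^2*ψ2^1*ψ3^3 + (192:ℂ)*c^2*ψ2^2 + (-144:ℂ)*c^2*ψ2^2*I^2 + (-192:ℂ)*c^2*ψ2^2*ψ3^2 + (-96:ℂ)*c^2*ψ2^3*ψ3^1 + (-128:ℂ)*c^3*ψ3^3 + (-448:ℂ)*c^3*ψ2^1*ψ3^2 + (-448:ℂ)*c^3*ψ2^2*ψ3^1 + (-128:ℂ)*c^3*ψ2^3 + (-6:ℂ)*c^4 + (6:ℂ)*c^4*I^2 + (-24:ℂ)*c^4*ψ3^2 + (-24:ℂ)*c^4*ψ2^1*ψ3^1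 + (-24:ℂ)*c^4*ψ2^2) * I_sq
end

section
/- Let ψ_1, ψ_2, ψ_3 be real numbers with ψ_1 + ψ_2 + ψ_3 = 0, ψ_1·ψ_2·ψ_3 ≠ 0, and ψ_2 ≠ ψ_3. Then the real quartic polynomial R̃_1(c) = b_4c⁴ + b_3c³ + b_2c² + b_1c + b_0, with b_4 = −9ψ_1²ψ_2ψ_3, b_3 = −4ψ_1(2ψ_2+ψ_3)(ψ_2+2ψ_3), b_2 = 6ψ_1²(ψ_2ψ_3−2), b_1 = 6ψ_1(2ψ_2ψ_3−1), b_0 = −(ψ_1²ψ_2ψ_3 − 4ψ_2ψ_3 + 1), has exactly two real roots; that is, the set {c ∈ ℝ : R̃_1(c) = 0} has exactly two elements. -/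
/-!
Over `ℂ` the quartic has roots `v₀, …, v₃`, and by Vieta its discriminant is `a⁶ Δ²`, where
`Δ = ∏_{i<j} (vⱼ - vᵢ)` is the Vandermonde determinant. Complex conjugation permutes the roots by
an involution `σ`, and permuting the rows of the Vandermonde matrix gives `conj Δ = sign σ • Δ`.
Under `ψ₁ + ψ₂ + ψ₃ = 0` the discriminant of `R̃₁` factors as
`-432 ψ₁⁴ ψ₂² ψ₃² (ψ₂ - ψ₃)⁴ ((4ψ₂ψ₃ - 1)² + 4ψ₁²) (1 + 4ψ₁²)³ < 0`,
so `Δ` is nonzero and purely imaginary, `σ` is odd, hence a single transposition, and exactly two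
roots, the fixed points of `σ`, are real.
-/

open Polynomial Matrix Equiv Finset Function ComplexConjugate

def quarticDisc {R : Type*} [CommRing R] (a b c d e : R) : R :=
  b^2*c^2*d^2 - 4*b^3*d^3 - 4*a*c^3*d^2 + 18*a*b*c*d^3 - 27*a^2*d^4 - 4*b^2*c^3*e
    + 18*b^3*c*d*e + 16*a*c^4*e - 80*a*b*c^2*d*e - 6*a*b^2*d^2*e + 144*a^2*c*d^2*e
    - 27*b^4*e^2 + 144*a*b^2*c*e^2 - 128*a^2*c^2*e^2 - 192*a^2*b*d*e^2 + 256*a^3*e^3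

theorem det_vandermonde_fin_four {R : Type*} [CommRing R] (x y z w : R) :
    (vandermonde ![x, y, z, w]).det
      = (y - x) * (z - x) * (w - x) * (z - y) * (w - y) * (w - z) := by
  simp [det_vandermonde, Fin.prod_univ_succ, mul_assoc]

theorem quarticDisc_vieta {R : Type*} [CommRing R] (a x y z w : R) :
    quarticDisc a (-(a * (x + y + z + w))) (a * (x*y + x*z + x*w + y*z + y*w + z*w))
      (-(a * (x*y*z + x*y*w + x*z*w + y*z*w))) (a * (x*y*z*w))
      = a ^ 6 * (vandermonde ![x, y, z, w]).det ^ 2 := by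
  rw [det_vandermonde_fin_four, quarticDisc]
  ring

theorem exists_roots_quartic {K : Type*} [Field K] [IsAlgClosed K] {a : K} (ha : a ≠ 0)
    (b c d e : K) :
    ∃ v : Fin 4 → K, (∀ t, a * t ^ 4 + b * t ^ 3 + c * t ^ 2 + d * t + e = 0 ↔ ∃ i, v i = t) ∧
      quarticDisc a b c d e = a ^ 6 * (vandermonde v).det ^ 2 := by
  set p : K[X] := C a * X ^ 4 + C b * X ^ 3 + C c * X ^ 2 + C d * X + C e
  have hdeg : p.natDegree = 4 := by unfold p; compute_degree!
  have hcard : p.roots.card = p.natDegree := splits_iff_card_roots.mp (IsAlgClosed.splits p)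
  have hlead : p.leadingCoeff = a := by simp [leadingCoeff, hdeg, p]
  obtain ⟨x, y, z, w, hroots⟩ := Multiset.card_eq_four.mp (hcard.trans hdeg)
  have vieta (k : ℕ) (hk : k ≤ 4) :
      p.coeff k = a * (-1) ^ (4 - k) * ({x, y, z, w} : Multiset K).esymm (4 - k) := by
    have h := coeff_eq_esymm_roots_of_card hcard (hdeg ▸ hk)
    rwa [hdeg, hlead, hroots] at h
  have h3 := vieta 3 (by norm_num)
  have h2 := vieta 2 (by norm_num)
  have h1 := vieta 1 (by norm_num)
  have h0 := vieta 0 (by norm_num)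
  simp [p, Multiset.esymm, Multiset.powersetCard_one] at h0 h1 h2 h3
  refine ⟨![x, y, z, w], fun t => ?_, ?_⟩
  · have hp : p ≠ 0 := ne_zero_of_natDegree_gt (n := 0) (by omega)
    simpa [p, hroots, Fin.exists_fin_succ, eq_comm] using (mem_roots hp (a := t)).symm
  · rw [← quarticDisc_vieta]
    congr 1
    · linear_combination h3
    · linear_combination h2
    · linear_combination h1
    · linear_combination h0

theorem exists_perm_comp_eq_of_involutive {ι α : Type*} [Finite ι] {z : ι → α} (hz : Injective z)
    {f : α → α} (hf : Involutive f) (hmaps : ∀ i, ∃ j, z j = f (z i)) :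
    ∃ σ : Perm ι, Involutive σ ∧ ∀ i, z (σ i) = f (z i) := by
  choose g hg using hmaps
  have hinj : Injective g := fun i j hij => hz (hf.injective (by rw [← hg, ← hg, hij]))
  refine ⟨Equiv.ofBijective g (Finite.injective_iff_bijective.mp hinj), fun i => hz ?_, hg⟩
  simp only [Equiv.ofBijective_apply, hg, hf (z i)]

theorem map_det_vandermonde_of_comp_perm {R : Type*} [CommRing R] (f : R →+* R) {n : ℕ}
    {z : Fin n → R} {σ : Perm (Fin n)} (h : ∀ i, z (σ i) = f (z i)) :
    f (vandermonde z).det = Perm.sign σ * (vandermonde z).det := by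
  rw [RingHom.map_det, ← det_permute]
  congr 1
  ext i j
  simp [vandermonde_apply, h]

theorem conj_eq_neg_of_sq_eq_neg {w : ℂ} {r : ℝ} (hr : r < 0) (h : w ^ 2 = r) : conj w = -w := by
  have hre := congrArg Complex.re h
  have him := congrArg Complex.im h
  simp only [pow_two, Complex.mul_re, Complex.mul_im, Complex.ofReal_re, Complex.ofReal_im] at hre him
  have hre0 : w.re = 0 := by
    rcases mul_eq_zero.mp (show w.re * w.im = 0 by linarith) with h0 | h0
    · exact h0
    · nlinarith [sq_nonneg w.re]
  apply Complex.ext <;> simp [hre0]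

theorem ne_zero_of_sq_eq_neg {w : ℂ} {r : ℝ} (hr : r < 0) (h : w ^ 2 = r) : w ≠ 0 := by
  rintro rfl
  rw [zero_pow two_ne_zero] at h
  exact hr.ne (by exact_mod_cast h.symm)

theorem sign_eq_neg_one_of_det_vandermonde_sq_neg {n : ℕ} {z : Fin n → ℂ} {σ : Perm (Fin n)}
    (h : ∀ i, z (σ i) = conj (z i)) {r : ℝ} (hr : r < 0) (hdet : (vandermonde z).det ^ 2 = r) :
    Perm.sign σ = -1 := by
  have hconj := map_det_vandermonde_of_comp_perm (starRingEnd ℂ) h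
  rw [conj_eq_neg_of_sq_eq_neg hr hdet] at hconj
  rcases Int.units_eq_one_or (Perm.sign σ) with hs | hs
  · simp only [hs, Units.val_one, Int.cast_one, one_mul, CharZero.neg_eq_self_iff] at hconj
    exact absurd hconj (ne_zero_of_sq_eq_neg hr hdet)
  · exact hs

theorem card_fixed_eq_two_of_sign_eq_neg_one (σ : Perm (Fin 4)) (hσ : Involutive σ)
    (hs : Perm.sign σ = -1) : #{i | σ i = i} = 2 := by
  revert σ
  unfold Involutive
  decide

theorem ncard_real_range_eq_card_fixed {ι : Type*} [Fintype ι] [DecidableEq ι] {z : ι → ℂ}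
    (hz : Injective z) {σ : Perm ι} (h : ∀ i, z (σ i) = conj (z i)) :
    {x : ℝ | ∃ i, z i = x}.ncard = #{i | σ i = i} := by
  have hreal {i} : σ i = i ↔ ((z i).re : ℂ) = z i := by
    rw [← hz.eq_iff, h, Complex.conj_eq_iff_re, eq_comm]
  have himage : {x : ℝ | ∃ i, z i = x} = (fun i => (z i).re) '' ↑({i | σ i = i} : Finset ι) := by
    ext x
    simp only [Set.mem_ofPred_eq, coe_filter, Set.mem_image, mem_univ, true_and, hreal]
    constructor
    · rintro ⟨i, hi⟩
      exact ⟨i, by simp [hi], by simp [hi]⟩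
    · rintro ⟨i, hi, rfl⟩
      exact ⟨i, hi.symm⟩
  rw [himage, Set.InjOn.ncard_image, Set.ncard_coe_finset]
  intro i hi j hj hij
  simp only [coe_filter, mem_univ, true_and, Set.mem_ofPred_eq, hreal] at hi hj hij
  exact hz (by rw [← hi, ← hj, hij])

theorem ncard_setOf_quartic_eq_zero_eq_two {a : ℝ} (ha : a ≠ 0) {b c d e : ℝ}
    (hdisc : quarticDisc a b c d e < 0) :
    {x : ℝ | a * x ^ 4 + b * x ^ 3 + c * x ^ 2 + d * x + e = 0}.ncard = 2 := by
  have haC : (a : ℂ) ≠ 0 := Complex.ofReal_ne_zero.mpr ha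
  obtain ⟨v, hroots, hdiscv⟩ := exists_roots_quartic haC b c d e
  have hdet : (vandermonde v).det ^ 2 = ((quarticDisc a b c d e / a ^ 6 : ℝ) : ℂ) := by
    have hcast : ((quarticDisc a b c d e : ℝ) : ℂ) = quarticDisc (a : ℂ) b c d e := by
      push_cast [quarticDisc]; rfl
    rw [Complex.ofReal_div, Complex.ofReal_pow, hcast, hdiscv]
    field_simp
  have hdisc' : quarticDisc a b c d e / a ^ 6 < 0 := div_neg_of_neg_of_pos hdisc (by positivity)
  have hinj : Injective v := det_vandermonde_ne_zero_iff.mp (ne_zero_of_sq_eq_neg hdisc' hdet)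
  have hconj_root (i : Fin 4) : ∃ j, v j = conj (v i) := by
    have hv := (hroots (v i)).mpr ⟨i, rfl⟩
    rw [← hroots]
    simpa using congrArg conj hv
  obtain ⟨σ, hσ, hσv⟩ := exists_perm_comp_eq_of_involutive hinj Complex.conj_conj hconj_root
  calc {x : ℝ | a * x ^ 4 + b * x ^ 3 + c * x ^ 2 + d * x + e = 0}.ncard
      = {x : ℝ | ∃ i, v i = x}.ncard := by
        congr 1; ext x; rw [Set.mem_ofPred_eq, Set.mem_ofPred_eq, ← hroots]; norm_cast
    _ = #{i | σ i = i} := ncard_real_range_eq_card_fixed hinj hσv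
    _ = 2 := card_fixed_eq_two_of_sign_eq_neg_one σ hσ
        (sign_eq_neg_one_of_det_vandermonde_sq_neg hσv hdisc' hdet)

/-- For real `ψ₁ + ψ₂ + ψ₃ = 0` with `ψ₁ψ₂ψ₃ ≠ 0` and `ψ₂ ≠ ψ₃`,
the Cayley-transformed quartic `R̃₁` has exactly two real roots. -/
theorem transformed_quartic_two_real_roots
    (ψ1 ψ2 ψ3 : ℝ) (hsum : ψ1 + ψ2 + ψ3 = 0)
    (hne : ψ1 * ψ2 * ψ3 ≠ 0) (h23 : ψ2 ≠ ψ3)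
    (b4 b3 b2 b1 b0 : ℝ)
    (hb4 : b4 = -(9 * ψ1 ^ 2 * ψ2 * ψ3))
    (hb3 : b3 = -(4 * ψ1 * (2 * ψ2 + ψ3) * (ψ2 + 2 * ψ3)))
    (hb2 : b2 = 6 * ψ1 ^ 2 * (ψ2 * ψ3 - 2))
    (hb1 : b1 = 6 * ψ1 * (2 * ψ2 * ψ3 - 1))
    (hb0 : b0 = -(ψ1 ^ 2 * ψ2 * ψ3 - 4 * ψ2 * ψ3 + 1)) :
    Set.ncard {c : ℝ | b4 * c ^ 4 + b3 * c ^ 3 + b2 * c ^ 2 + b1 * c + b0 = 0} = 2 := by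
  obtain ⟨⟨hψ1, hψ2⟩, hψ3⟩ : (ψ1 ≠ 0 ∧ ψ2 ≠ 0) ∧ ψ3 ≠ 0 := by simpa [not_or] using hne
  have hψ23 : ψ2 - ψ3 ≠ 0 := sub_ne_zero.mpr h23
  have hdisc : quarticDisc b4 b3 b2 b1 b0 = -432 * ψ1 ^ 4 * ψ2 ^ 2 * ψ3 ^ 2 * (ψ2 - ψ3) ^ 4
      * ((4 * ψ2 * ψ3 - 1) ^ 2 + 4 * ψ1 ^ 2) * (1 + 4 * ψ1 ^ 2) ^ 3 := by
    obtain rfl : ψ1 = -(ψ2 + ψ3) := by linear_combination hsum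
    subst hb4 hb3 hb2 hb1 hb0
    unfold quarticDisc
    ring
  refine ncard_setOf_quartic_eq_zero_eq_two (by simp [hb4, hψ1, hψ2, hψ3]) ?_
  rw [hdisc]
  have : 0 < ψ1 ^ 4 * ψ2 ^ 2 * ψ3 ^ 2 * (ψ2 - ψ3) ^ 4 * ((4 * ψ2 * ψ3 - 1) ^ 2 + 4 * ψ1 ^ 2)
      * (1 + 4 * ψ1 ^ 2) ^ 3 := by positivity
  linarith
end
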